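/- arXiv:2009.06395 — 10 statements merged into one kernel-verified Lean document; each statement's English description precedes it below -/
import Mathlib

section
/- Let 0 < x₂ ≤ ∞ and μ > 0. Then lim_{t→∞} t^μ ∫₀^{x₂} x^{μ−1} (1+x)^{−t} dx = Γ(μ), where Γ is the Gamma function. (In particular the limit is independent of x₂.) -/
/-!
Substituting `x = y / t` turns `t ^ μ ∫_S x^(μ-1) (1+x)^(-t) dx` into
`∫_{t • S} y^(μ-1) (1 + y/t)^(-t) dy`. By Bernoulli's inequality `(1 + y/t)^(-t)` decreases in `t`
to `exp (-y)`, so the integrand is dominated by its (integrable) value at `t = μ + 1`, while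
`t • S` exhausts `(0, ∞)` as soon as `S` contains an interval `(0, ε)`. Dominated convergence
gives the limit `∫_0^∞ y^(μ-1) e^(-y) dy = Γ(μ)`.
-/

open MeasureTheory Filter Set Real Topology Pointwise

lemma one_add_div_rpow_neg_antitoneOn {y : ℝ} (hy : 0 ≤ y) :
    AntitoneOn (fun t : ℝ => (1 + y / t) ^ (-t)) (Ioi 0) := by
  intro s (hs : 0 < s) t (ht : 0 < t) hst
  have hBernoulli : 1 + y / s ≤ (1 + y / t) ^ (t / s) := by
    have := one_add_mul_self_le_rpow_one_add (by linarith [div_nonneg hy ht.le] : -1 ≤ y / t)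
      ((one_le_div hs).mpr hst)
    rwa [mul_comm, div_mul_div_cancel₀ ht.ne'] at this
  have hpow : (1 + y / s) ^ s ≤ (1 + y / t) ^ t := by
    calc (1 + y / s) ^ s ≤ ((1 + y / t) ^ (t / s)) ^ s := by gcongr
      _ = (1 + y / t) ^ t := by rw [← rpow_mul (by positivity), div_mul_cancel₀ _ hs.ne']
  simp only [rpow_neg (by positivity : (0 : ℝ) ≤ 1 + y / s),
    rpow_neg (by positivity : (0 : ℝ) ≤ 1 + y / t)]
  gcongr

lemma tendsto_one_add_div_rpow_neg (y : ℝ) :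
    Tendsto (fun t : ℝ => (1 + y / t) ^ (-t)) atTop (𝓝 (exp (-y))) := by
  have hbase : Tendsto (fun t : ℝ => 1 + y / t) atTop (𝓝 1) := by
    simpa using (tendsto_const_nhds (x := (1 : ℝ))).add
      ((tendsto_const_nhds (x := y)).div_atTop tendsto_id)
  rw [exp_neg]
  refine ((tendsto_one_add_div_rpow_exp y).inv₀ (exp_ne_zero y)).congr' ?_
  filter_upwards [hbase.eventually_const_le one_pos] with t ht
  rw [rpow_neg (by linarith)]

lemma integrableOn_rpow_mul_one_add_div_rpow_neg {μ T : ℝ} (hμ : 0 < μ) (hT : μ < T) :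
    IntegrableOn (fun y : ℝ => y ^ (μ - 1) * (1 + y / T) ^ (-T)) (Ioi 0) := by
  have hT0 : 0 < T := hμ.trans hT
  have hmeas : AEStronglyMeasurable (fun y : ℝ => y ^ (μ - 1) * (1 + y / T) ^ (-T)) := by
    fun_prop
  rw [← Ioc_union_Ioi_eq_Ioi zero_le_one]
  refine IntegrableOn.union ?_ ?_
  · have hint : IntegrableOn (fun y : ℝ => y ^ (μ - 1)) (Ioc 0 1) :=
      (intervalIntegrable_iff_integrableOn_Ioc_of_le zero_le_one).mp
        (intervalIntegral.intervalIntegrable_rpow' (by linarith))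
    refine hint.mono' hmeas.restrict ?_
    filter_upwards [ae_restrict_mem measurableSet_Ioc] with y ⟨hy, _⟩
    have hle : (1 + y / T) ^ (-T) ≤ 1 :=
      rpow_le_one_of_one_le_of_nonpos (le_add_of_nonneg_right (by positivity)) (by linarith)
    rw [norm_mul, norm_of_nonneg (by positivity), norm_of_nonneg (by positivity)]
    exact mul_le_of_le_one_right (by positivity) hle
  · have hint : IntegrableOn (fun y : ℝ => T ^ T * y ^ (μ - 1 - T)) (Ioi 1) :=
      (integrableOn_Ioi_rpow_of_lt (by linarith) one_pos).const_mul _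
    refine hint.mono' hmeas.restrict ?_
    filter_upwards [ae_restrict_mem measurableSet_Ioi] with y (hy : 1 < y)
    have hy0 : 0 < y := one_pos.trans hy
    have hle : (1 + y / T) ^ (-T) ≤ (y / T) ^ (-T) :=
      rpow_le_rpow_of_nonpos (by positivity) (by linarith) (by linarith)
    rw [norm_mul, norm_of_nonneg (by positivity), norm_of_nonneg (by positivity)]
    calc y ^ (μ - 1) * (1 + y / T) ^ (-T) ≤ y ^ (μ - 1) * (y / T) ^ (-T) := by gcongr
      _ = T ^ T * y ^ (μ - 1 - T) := by
        rw [div_rpow hy0.le hT0.le, rpow_neg hT0.le, div_inv_eq_mul, sub_eq_add_neg (μ - 1),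
          rpow_add hy0]
        ring

lemma eventually_mem_smul_set_atTop {S : Set ℝ} (hSnhds : S ∈ 𝓝[>] 0) {y : ℝ} (hy : 0 < y) :
    ∀ᶠ t : ℝ in atTop, y ∈ t • S := by
  have hlim : Tendsto (fun t : ℝ => t⁻¹ * y) atTop (𝓝[>] 0) := by
    refine tendsto_nhdsWithin_iff.mpr ⟨by simpa using tendsto_inv_atTop_zero.mul_const y, ?_⟩
    filter_upwards [eventually_gt_atTop 0] with t ht
    exact mul_pos (inv_pos.mpr ht) hy
  filter_upwards [hlim hSnhds, eventually_gt_atTop 0] with t ht ht0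
  exact (mem_smul_set_iff_inv_smul_mem₀ ht0.ne' S y).mpr ht

lemma rpow_mul_setIntegral_rpow_mul_one_add_rpow_neg {μ t : ℝ} {S : Set ℝ} (hS : MeasurableSet S)
    (hS0 : S ⊆ Ioi 0) (ht : 0 < t) :
    t ^ μ * ∫ x in S, x ^ (μ - 1) * (1 + x) ^ (-t) =
      ∫ y in t • S, y ^ (μ - 1) * (1 + y / t) ^ (-t) := by
  have hsubst := Measure.setIntegral_comp_smul_of_pos volume
    (fun y : ℝ => y ^ (μ - 1) * (1 + y / t) ^ (-t)) S ht
  have hintegrand : EqOn (fun x : ℝ => (t • x) ^ (μ - 1) * (1 + t • x / t) ^ (-t))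
      (fun x => t ^ (μ - 1) * (x ^ (μ - 1) * (1 + x) ^ (-t))) S := by
    intro x hx
    simp only [smul_eq_mul, mul_rpow ht.le (le_of_lt (hS0 hx)), mul_div_cancel_left₀ x ht.ne']
    ring
  rw [setIntegral_congr_fun hS hintegrand, integral_const_mul, Module.finrank_self, pow_one,
    smul_eq_mul] at hsubst
  rw [← sub_add_cancel μ 1, rpow_add_one ht.ne', add_sub_cancel_right, mul_comm _ t, mul_assoc,
    hsubst, mul_inv_cancel_left₀ ht.ne']

theorem tendsto_setIntegral_smul_rpow_mul_one_add_div_rpow_neg {μ : ℝ} (hμ : 0 < μ) {S : Set ℝ}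
    (hS : MeasurableSet S) (hS0 : S ⊆ Ioi 0) (hSnhds : S ∈ 𝓝[>] 0) :
    Tendsto (fun t : ℝ => ∫ y in t • S, y ^ (μ - 1) * (1 + y / t) ^ (-t)) atTop
      (𝓝 (Gamma μ)) := by
  set f : ℝ → ℝ → ℝ := fun t y => y ^ (μ - 1) * (1 + y / t) ^ (-t)
  have hindicator : ∀ᶠ t in atTop,
      ∫ y in Ioi 0, (t • S).indicator (f t) y = ∫ y in t • S, f t y := by
    filter_upwards [eventually_gt_atTop 0] with t ht
    rw [setIntegral_indicator (hS.const_smul₀ t), inter_eq_right.mpr]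
    rintro _ ⟨x, hx, rfl⟩
    exact mul_pos ht (hS0 hx)
  have hGamma : Gamma μ = ∫ y in Ioi 0, y ^ (μ - 1) * exp (-y) := by
    rw [Gamma_eq_integral hμ]
    exact integral_congr_ae (ae_of_all _ fun y => mul_comm _ _)
  rw [hGamma]
  refine Tendsto.congr' hindicator
    (tendsto_integral_filter_of_dominated_convergence (f (μ + 1)) ?_ ?_
      (integrableOn_rpow_mul_one_add_div_rpow_neg hμ (lt_add_one μ)) ?_)
  · filter_upwards with t
    exact ((by fun_prop : Measurable (f t)).indicator (hS.const_smul₀ t)).aestronglyMeasurable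
  · filter_upwards [eventually_ge_atTop (μ + 1)] with t ht
    filter_upwards [ae_restrict_mem measurableSet_Ioi] with y (hy : 0 < y)
    have hT : 0 < μ + 1 := by linarith
    have ht0 : 0 < t := hT.trans_le ht
    refine (norm_indicator_le_norm_self _ _).trans ?_
    rw [norm_of_nonneg (by positivity)]
    exact mul_le_mul_of_nonneg_left
      (one_add_div_rpow_neg_antitoneOn hy.le hT ht0 ht) (by positivity)
  · filter_upwards [ae_restrict_mem measurableSet_Ioi] with y (hy : 0 < y)
    refine ((tendsto_one_add_div_rpow_neg y).const_mul (y ^ (μ - 1))).congr' ?_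
    filter_upwards [eventually_mem_smul_set_atTop hSnhds hy] with t ht
    exact (indicator_of_mem ht (f t)).symm

theorem tendsto_rpow_mul_setIntegral_rpow_mul_one_add_rpow_neg {μ : ℝ} (hμ : 0 < μ) {S : Set ℝ}
    (hS : MeasurableSet S) (hS0 : S ⊆ Ioi 0) (hSnhds : S ∈ 𝓝[>] 0) :
    Tendsto (fun t : ℝ => t ^ μ * ∫ x in S, x ^ (μ - 1) * (1 + x) ^ (-t)) atTop
      (𝓝 (Gamma μ)) := by
  refine (tendsto_setIntegral_smul_rpow_mul_one_add_div_rpow_neg hμ hS hS0 hSnhds).congr' ?_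
  filter_upwards [eventually_gt_atTop 0] with t ht
  exact (rpow_mul_setIntegral_rpow_mul_one_add_rpow_neg hS hS0 ht).symm

/-- Lemma 2.1, case `x₁ = 0`: for `μ > 0` and any `0 < x₂ ≤ ∞`,
`t^μ ∫₀^{x₂} x^{μ-1} (1+x)^{-t} dx → Γ(μ)` as `t → ∞`. -/
theorem stmt_0 (μ : ℝ) (hμ : 0 < μ) (x₂ : EReal) (hx₂ : 0 < x₂) :
    Tendsto (fun t : ℝ => t ^ μ *
        ∫ x in {x : ℝ | 0 < x ∧ (x : EReal) < x₂}, x ^ (μ - 1) * (1 + x) ^ (-t))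
      atTop (nhds (Real.Gamma μ)) := by
  have hbelow : {x : ℝ | (x : EReal) < x₂} ∈ 𝓝 0 :=
    (isOpen_Iio.preimage continuous_coe_real_ereal).mem_nhds (by simpa using hx₂)
  refine tendsto_rpow_mul_setIntegral_rpow_mul_one_add_rpow_neg hμ ?_ (fun x hx => hx.1)
    (inter_mem self_mem_nhdsWithin (mem_nhdsWithin_of_mem_nhds hbelow))
  exact measurableSet_Ioi.inter (measurable_coe_real_ereal measurableSet_Iio)
end

section
/- Let 0 < x₁ < x₂ ≤ ∞ and μ ∈ ℝ. Then lim_{t→∞} (x₁+1)^{t−1} · t · ∫_{x₁}^{x₂} x^{μ−1}(1+x)^{−t} dx = x₁^{μ−1}. (In particular the limit is independent of x₂.) -/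
/-! Normalised by `(x₁ + 1)^(t - 1) t`, the weight `(1 + x)^(-t)` has mass `t / (t - 1) → 1` on
`(x₁, ∞)`, while on `(b, ∞)`, for any `b > x₁`, it is bounded by
`C t ((1 + x₁) / (1 + b))^t (1 + x)^(-t₀)`, whose coefficient tends to `0`. So it is an
approximate identity at `x₁` for every `g` that has a right limit at `x₁` and is integrable against
some `(1 + x)^(-t₀)`; the theorem is the case `g x = x^(μ-1)` for `x < x₂` and `g x = 0`
otherwise. -/

open MeasureTheory Filter Set Real Topology

section OneAddRpow

variable {a t : ℝ}

lemma integrableOn_Ioi_one_add_rpow_neg (ha : -1 < a) (ht : 1 < t) :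
    IntegrableOn (fun x : ℝ => (1 + x) ^ (-t)) (Ioi a) := by
  have h := integrableOn_Ioi_rpow_of_lt (by linarith : -t < -1) (by linarith : 0 < 1 + a)
  rwa [← (measurePreserving_add_left volume (1 : ℝ)).integrableOn_comp_preimage
    (measurableEmbedding_addLeft 1), show (1 + ·) ⁻¹' Ioi (1 + a) = Ioi a by simp] at h

lemma integral_Ioi_one_add_rpow_neg (ha : -1 < a) (ht : 1 < t) :
    ∫ x in Ioi a, (1 + x) ^ (-t) = (a + 1) ^ (1 - t) / (t - 1) := by
  have h := (measurePreserving_add_left volume (1 : ℝ)).setIntegral_preimage_emb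
    (measurableEmbedding_addLeft 1) (fun y => y ^ (-t)) (Ioi (1 + a))
  rw [show (1 + ·) ⁻¹' Ioi (1 + a) = Ioi a by simp] at h
  rw [h, integral_Ioi_rpow_of_lt (by linarith) (by linarith), add_comm 1 a,
    show -t + 1 = 1 - t by ring, neg_div, ← div_neg, neg_sub]

lemma tendsto_mul_integral_Ioi_one_add_rpow_neg (ha : -1 < a) :
    Tendsto (fun t => (a + 1) ^ (t - 1) * t * ∫ x in Ioi a, (1 + x) ^ (-t)) atTop (𝓝 1) := by
  have h : Tendsto (fun t : ℝ => 1 + (t - 1)⁻¹) atTop (𝓝 1) := by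
    have h0 : Tendsto (fun t : ℝ => t - 1) atTop atTop :=
      tendsto_atTop_add_const_right _ _ tendsto_id
    simpa using (tendsto_inv_atTop_zero.comp h0).const_add 1
  refine h.congr' ?_
  filter_upwards [eventually_gt_atTop 1] with t ht
  have h1 : t - 1 ≠ 0 := by linarith
  rw [integral_Ioi_one_add_rpow_neg ha ht, mul_div_assoc', mul_right_comm,
    ← rpow_add (by linarith)]
  field_simp
  rw [show t - 1 + (1 - t) = 0 by ring, rpow_zero]
  ring

lemma tendsto_mul_one_add_rpow_sub {b : ℝ} (ha : -1 < a) (hab : a < b) (t₀ : ℝ) :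
    Tendsto (fun t => (a + 1) ^ (t - 1) * t * (1 + b) ^ (t₀ - t)) atTop (𝓝 0) := by
  have hc : 0 < log (1 + b) - log (a + 1) := by
    rw [sub_pos]; exact log_lt_log (by linarith) (by linarith)
  have h := (tendsto_rpow_mul_exp_neg_mul_atTop_nhds_zero 1 _ hc).const_mul
    (exp (log (1 + b) * t₀ - log (a + 1)))
  simp only [mul_zero, rpow_one] at h
  refine h.congr fun t => ?_
  rw [rpow_def_of_pos (by linarith : 0 < a + 1), rpow_def_of_pos (by linarith : 0 < 1 + b),
    mul_right_comm, ← exp_add, mul_left_comm, ← exp_add]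
  ring_nf

end OneAddRpow

section Laplace

variable {g : ℝ → ℝ} {a t₀ : ℝ}

lemma MeasureTheory.IntegrableOn.mul_one_add_rpow_neg_of_le {t : ℝ} (ha : -1 < a)
    (hint : IntegrableOn (fun x => g x * (1 + x) ^ (-t₀)) (Ioi a)) (ht : t₀ ≤ t) :
    IntegrableOn (fun x => g x * (1 + x) ^ (-t)) (Ioi a) := by
  have hbdd : ∀ᵐ x ∂volume.restrict (Ioi a), ‖(1 + x) ^ (t₀ - t)‖ ≤ (1 + a) ^ (t₀ - t) := by
    filter_upwards [ae_restrict_mem measurableSet_Ioi] with x hx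
    rw [norm_of_nonneg (rpow_nonneg (by linarith [mem_Ioi.1 hx]) _)]
    exact rpow_le_rpow_of_nonpos (by linarith) (by linarith [mem_Ioi.1 hx]) (by linarith)
  refine IntegrableOn.congr_fun
    (hint.mul_bdd ((measurable_const.add measurable_id).pow_const _).aestronglyMeasurable hbdd)
    (fun x hx => ?_) measurableSet_Ioi
  change g x * (1 + x) ^ (-t₀) * (1 + x) ^ (t₀ - t) = _
  rw [mul_assoc, ← rpow_add (by linarith [mem_Ioi.1 hx]), show -t₀ + (t₀ - t) = -t by ring]

lemma abs_integral_Ioi_mul_one_add_rpow_neg_le {b ε t : ℝ} (ha : -1 < a) (hab : a < b)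
    (hint : IntegrableOn (fun x => g x * (1 + x) ^ (-t₀)) (Ioi a)) (ht₀ : t₀ ≤ t) (ht : 1 < t)
    (hε : ∀ x ∈ Ioc a b, |g x| ≤ ε) :
    |∫ x in Ioi a, g x * (1 + x) ^ (-t)| ≤
      ε * (∫ x in Ioi a, (1 + x) ^ (-t)) +
        (1 + b) ^ (t₀ - t) * ∫ x in Ioi a, |g x * (1 + x) ^ (-t₀)| := by
  have hε₀ : 0 ≤ ε := (abs_nonneg _).trans (hε b ⟨hab, le_rfl⟩)
  have hb : 0 < 1 + b := by linarith
  have hw := integrableOn_Ioi_one_add_rpow_neg ha ht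
  have hpt : ∀ x ∈ Ioi a, ‖g x * (1 + x) ^ (-t)‖ ≤
      ε * (1 + x) ^ (-t) + (1 + b) ^ (t₀ - t) * |g x * (1 + x) ^ (-t₀)| := by
    intro x hx
    have hx₀ : 0 < 1 + x := by linarith [mem_Ioi.1 hx]
    rw [norm_eq_abs]
    rcases le_or_gt x b with hxb | hbx
    · calc |g x * (1 + x) ^ (-t)| = |g x| * (1 + x) ^ (-t) := by
            rw [abs_mul, abs_of_pos (rpow_pos_of_pos hx₀ _)]
        _ ≤ ε * (1 + x) ^ (-t) := by gcongr; exact hε x ⟨hx, hxb⟩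
        _ ≤ _ := le_add_of_nonneg_right (mul_nonneg (rpow_nonneg hb.le _) (abs_nonneg _))
    · calc |g x * (1 + x) ^ (-t)| = (1 + x) ^ (t₀ - t) * |g x * (1 + x) ^ (-t₀)| := by
            rw [abs_mul, abs_mul, abs_of_pos (rpow_pos_of_pos hx₀ _),
              abs_of_pos (rpow_pos_of_pos hx₀ _), mul_left_comm, ← rpow_add hx₀,
              show t₀ - t + -t₀ = -t by ring]
        _ ≤ (1 + b) ^ (t₀ - t) * |g x * (1 + x) ^ (-t₀)| :=
            mul_le_mul_of_nonneg_right (rpow_le_rpow_of_nonpos hb (by linarith) (by linarith))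
              (abs_nonneg _)
        _ ≤ _ := le_add_of_nonneg_left (by positivity)
  calc |∫ x in Ioi a, g x * (1 + x) ^ (-t)|
      ≤ ∫ x in Ioi a, ε * (1 + x) ^ (-t) + (1 + b) ^ (t₀ - t) * |g x * (1 + x) ^ (-t₀)| :=
        norm_integral_le_of_norm_le ((hw.const_mul ε).add (hint.abs.const_mul _))
          ((ae_restrict_iff' measurableSet_Ioi).2 (Eventually.of_forall hpt))
    _ = _ := by
        rw [integral_add (hw.const_mul ε) (hint.abs.const_mul _), integral_const_mul,
          integral_const_mul]

lemma tendsto_mul_integral_Ioi_mul_one_add_rpow_neg_of_tendsto_zero (ha : -1 < a)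
    (hg : Tendsto g (𝓝[>] a) (𝓝 0))
    (hint : IntegrableOn (fun x => g x * (1 + x) ^ (-t₀)) (Ioi a)) :
    Tendsto (fun t => (a + 1) ^ (t - 1) * t * ∫ x in Ioi a, g x * (1 + x) ^ (-t))
      atTop (𝓝 0) := by
  rw [Metric.tendsto_nhds]
  intro ε hε
  obtain ⟨b, hab, hb⟩ : ∃ b ∈ Ioi a, ∀ x ∈ Ioc a b, |g x| ≤ ε / 4 := by
    have h := (Metric.tendsto_nhds.1 hg) (ε / 4) (by positivity)
    obtain ⟨b, hab, hsub⟩ := mem_nhdsGT_iff_exists_Ioc_subset.1 h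
    exact ⟨b, hab, fun x hx => (by simpa using hsub hx : |g x| < ε / 4).le⟩
  set C := ∫ x in Ioi a, |g x * (1 + x) ^ (-t₀)|
  have hmain := (tendsto_mul_integral_Ioi_one_add_rpow_neg ha).eventually
    (eventually_lt_nhds one_lt_two)
  have htail := ((tendsto_mul_one_add_rpow_sub ha hab t₀).mul_const C).eventually
    (eventually_lt_nhds (by rw [zero_mul]; exact half_pos hε))
  filter_upwards [hmain, htail, eventually_ge_atTop t₀, eventually_gt_atTop 1]
    with t hmain htail ht₀ ht
  have hN : 0 ≤ (a + 1) ^ (t - 1) * t := by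
    have : 0 < a + 1 := by linarith
    positivity
  rw [Real.dist_eq, sub_zero, abs_mul, abs_of_nonneg hN]
  calc (a + 1) ^ (t - 1) * t * |∫ x in Ioi a, g x * (1 + x) ^ (-t)|
      ≤ (a + 1) ^ (t - 1) * t *
          (ε / 4 * (∫ x in Ioi a, (1 + x) ^ (-t)) + (1 + b) ^ (t₀ - t) * C) :=
        mul_le_mul_of_nonneg_left
          (abs_integral_Ioi_mul_one_add_rpow_neg_le ha hab hint ht₀ ht hb) hN
    _ = ε / 4 * ((a + 1) ^ (t - 1) * t * ∫ x in Ioi a, (1 + x) ^ (-t)) +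
          (a + 1) ^ (t - 1) * t * (1 + b) ^ (t₀ - t) * C := by ring
    _ < ε / 4 * 2 + ε / 2 := by gcongr
    _ = ε := by ring

theorem tendsto_mul_integral_Ioi_mul_one_add_rpow_neg {L : ℝ} (ha : -1 < a)
    (hg : Tendsto g (𝓝[>] a) (𝓝 L))
    (hint : IntegrableOn (fun x => g x * (1 + x) ^ (-t₀)) (Ioi a)) :
    Tendsto (fun t => (a + 1) ^ (t - 1) * t * ∫ x in Ioi a, g x * (1 + x) ^ (-t))
      atTop (𝓝 L) := by
  have hint_of_le {t : ℝ} (ht : max t₀ 2 ≤ t) :=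
    hint.mul_one_add_rpow_neg_of_le ha ((le_max_left _ _).trans ht)
  have hw {t : ℝ} (ht : max t₀ 2 ≤ t) : IntegrableOn (fun x => L * (1 + x) ^ (-t)) (Ioi a) :=
    (integrableOn_Ioi_one_add_rpow_neg ha (by linarith [le_max_right t₀ 2])).const_mul L
  have hzero := tendsto_mul_integral_Ioi_mul_one_add_rpow_neg_of_tendsto_zero
    (g := fun x => g x - L) ha (by simpa using hg.sub_const L)
    (by simp only [sub_mul]; exact (hint_of_le le_rfl).sub (hw le_rfl))
  have h := hzero.add ((tendsto_mul_integral_Ioi_one_add_rpow_neg ha).const_mul L)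
  rw [zero_add, mul_one] at h
  refine h.congr' ?_
  filter_upwards [eventually_ge_atTop (max t₀ 2)] with t ht
  simp only [sub_mul, integral_sub (hint_of_le ht) (hw ht), integral_const_mul]
  ring

end Laplace

lemma integrableOn_rpow_mul_one_add_rpow_neg {μ a t : ℝ} (ha : 0 < a) (ht : 0 ≤ t)
    (hμt : μ < t) :
    IntegrableOn (fun x : ℝ => x ^ (μ - 1) * (1 + x) ^ (-t)) (Ioi a) := by
  refine Integrable.mono' (integrableOn_Ioi_rpow_of_lt (by linarith : μ - 1 - t < -1) ha)
    (by fun_prop) ((ae_restrict_iff' measurableSet_Ioi).2 (Eventually.of_forall fun x hx => ?_))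
  have hx : 0 < x := ha.trans hx
  rw [norm_of_nonneg (by positivity), sub_eq_add_neg (μ - 1), rpow_add hx]
  exact mul_le_mul_of_nonneg_left (rpow_le_rpow_of_nonpos hx (by linarith) (by linarith))
    (rpow_nonneg hx.le _)

/-- Lemma 2.1, case `x₁ > 0`: for any `μ ∈ ℝ` and `x₁ < x₂ ≤ ∞`,
`(x₁+1)^{t-1} t ∫_{x₁}^{x₂} x^{μ-1}(1+x)^{-t} dx → x₁^{μ-1}` as `t → ∞`. -/
theorem stmt_1 (μ x₁ : ℝ) (hx₁ : 0 < x₁) (x₂ : EReal) (hx₂ : (x₁ : EReal) < x₂) :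
    Tendsto (fun t : ℝ => (x₁ + 1) ^ (t - 1) * t *
        ∫ x in {x : ℝ | x₁ < x ∧ (x : EReal) < x₂}, x ^ (μ - 1) * (1 + x) ^ (-t))
      atTop (nhds (x₁ ^ (μ - 1))) := by
  set T := {x : ℝ | (x : EReal) < x₂}
  have hT : IsOpen T := isOpen_lt continuous_coe_real_ereal continuous_const
  have hg : Tendsto (T.indicator fun x => x ^ (μ - 1)) (𝓝[>] x₁) (𝓝 (x₁ ^ (μ - 1))) := by
    refine (((continuousAt_rpow_const _ _ (Or.inl hx₁.ne')).tendsto).congr' ?_).mono_left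
      nhdsWithin_le_nhds
    filter_upwards [hT.mem_nhds hx₂] with x hx using
      (indicator_of_mem hx (fun x : ℝ => x ^ (μ - 1))).symm
  have hint : IntegrableOn
      (fun x => T.indicator (fun x => x ^ (μ - 1)) x * (1 + x) ^ (-(|μ| + 1))) (Ioi x₁) :=
    IntegrableOn.congr_fun ((integrableOn_rpow_mul_one_add_rpow_neg (μ := μ) hx₁ (by positivity)
      (by linarith [le_abs_self μ])).indicator hT.measurableSet)
      (fun x _ => indicator_mul_left _ _ _) measurableSet_Ioi
  rw [show {x : ℝ | x₁ < x ∧ (x : EReal) < x₂} = Ioi x₁ ∩ T from rfl]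
  simp_rw [← setIntegral_indicator hT.measurableSet, indicator_mul_left]
  exact tendsto_mul_integral_Ioi_mul_one_add_rpow_neg (by linarith) hg hint
end

section
/- Let θ > 0, p > −1 and η₂ ∈ (0, ∞]. Then lim_{t→∞} t^{(p+1)/(2θ)} ∫₀^{η₂} (1+r^{2θ})^{−t} r^{p} dr = (1/(2θ)) · Γ((p+1)/(2θ)), where Γ is the Gamma function. -/
/-!
With `a = 2θ` and `S = (0, η₂)`, substituting `r = t^{-1/a} s` turns
`t^{(p+1)/a} ∫_S (1 + r^a)^{-t} r^p dr` into `∫_{t^{1/a} S} (1 + s^a/t)^{-t} s^p ds`. Since `S`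
contains an interval `(0, η)`, the dilated sets `t^{1/a} S` eventually contain every `s > 0`, while
`(1 + s^a/t)^{-t}` decreases to `e^{-s^a}` as `t → ∞` (Bernoulli's inequality). Its value at a fixed
`t₀` with `a t₀ > p + 1` is an integrable majorant, so dominated convergence gives the limit
`∫₀^∞ e^{-s^a} s^p ds = Γ((p+1)/a)/a`.
-/

open MeasureTheory Filter Set Real Topology Pointwise

theorem one_add_div_rpow_neg_le_of_le {x t₀ t : ℝ} (hx : 0 ≤ x) (ht₀ : 0 < t₀) (ht : t₀ ≤ t) :
    (1 + x / t) ^ (-t) ≤ (1 + x / t₀) ^ (-t₀) := by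
  have ht' : 0 < t := ht₀.trans_le ht
  have h_pos : 0 < 1 + x / t := by positivity
  have h₀_pos : 0 < 1 + x / t₀ := by positivity
  have bernoulli : 1 + x / t₀ ≤ (1 + x / t) ^ (t / t₀) := by
    calc 1 + x / t₀ = 1 + t / t₀ * (x / t) := by field_simp
      _ ≤ (1 + x / t) ^ (t / t₀) :=
        one_add_mul_self_le_rpow_one_add (by linarith [div_nonneg hx ht'.le])
          ((one_le_div ht₀).2 ht)
  have key : (1 + x / t₀) ^ t₀ ≤ (1 + x / t) ^ t :=
    calc (1 + x / t₀) ^ t₀ ≤ ((1 + x / t) ^ (t / t₀)) ^ t₀ := by gcongr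
      _ = (1 + x / t) ^ t := by rw [← rpow_mul h_pos.le, div_mul_cancel₀ _ ht₀.ne']
  rw [rpow_neg h_pos.le, rpow_neg h₀_pos.le]
  exact inv_anti₀ (by positivity) key

section

variable {a p t : ℝ}

theorem integrableOn_one_add_rpow_div_rpow_neg_mul_rpow (hp : -1 < p) (ht : 0 < t)
    (hpt : p - a * t < -1) :
    IntegrableOn (fun s : ℝ => (1 + s ^ a / t) ^ (-t) * s ^ p) (Ioi 0) := by
  have hmeas : AEStronglyMeasurable (fun s : ℝ => (1 + s ^ a / t) ^ (-t) * s ^ p) := by fun_prop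
  rw [← Ioc_union_Ioi_eq_Ioi zero_le_one]
  refine IntegrableOn.union ?_ ?_
  · have hdom : IntegrableOn (fun s : ℝ => s ^ p) (Ioc 0 1) := by
      simpa [intervalIntegrable_iff_integrableOn_Ioc_of_le zero_le_one] using
        intervalIntegral.intervalIntegrable_rpow' (a := 0) (b := 1) hp
    refine hdom.mono' hmeas.restrict ((ae_restrict_mem measurableSet_Ioc).mono fun s hs => ?_)
    have hs₀ : 0 < s := hs.1
    rw [norm_of_nonneg (by positivity)]
    calc (1 + s ^ a / t) ^ (-t) * s ^ p ≤ 1 * s ^ p := by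
          gcongr
          exact rpow_le_one_of_one_le_of_nonpos (by simp; positivity) (by linarith)
      _ = s ^ p := one_mul _
  · have hdom : IntegrableOn (fun s : ℝ => t ^ t * s ^ (p - a * t)) (Ioi 1) :=
      (integrableOn_Ioi_rpow_of_lt hpt one_pos).const_mul _
    refine hdom.mono' hmeas.restrict ((ae_restrict_mem measurableSet_Ioi).mono fun s hs => ?_)
    have hs₀ : 0 < s := one_pos.trans hs
    rw [norm_of_nonneg (by positivity)]
    calc (1 + s ^ a / t) ^ (-t) * s ^ p ≤ (s ^ a / t) ^ (-t) * s ^ p := by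
          refine mul_le_mul_of_nonneg_right ?_ (by positivity)
          exact rpow_le_rpow_of_nonpos (by positivity) (le_add_of_nonneg_left zero_le_one)
            (neg_nonpos.2 ht.le)
      _ = t ^ t * s ^ (p - a * t) := by
          rw [div_rpow (by positivity) ht.le, ← rpow_mul hs₀.le, rpow_neg ht.le, div_inv_eq_mul,
            sub_eq_add_neg, rpow_add hs₀, mul_neg]
          ring

theorem tendsto_setIntegral_one_add_rpow_div_rpow_neg_mul_rpow (ha : 0 < a) (hp : -1 < p)
    {A : ℝ → Set ℝ} (hA_meas : ∀ t, MeasurableSet (A t)) (hA_pos : ∀ᶠ t in atTop, A t ⊆ Ioi 0)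
    (hA : ∀ s, 0 < s → ∀ᶠ t in atTop, s ∈ A t) :
    Tendsto (fun t => ∫ s in A t, (1 + s ^ a / t) ^ (-t) * s ^ p) atTop
      (𝓝 ((1 / a) * Gamma ((p + 1) / a))) := by
  obtain ⟨t₀, ht₀, hpt₀⟩ : ∃ t₀, 0 < t₀ ∧ p - a * t₀ < -1 :=
    ⟨(p + 2) / a, div_pos (by linarith) ha, by rw [mul_div_cancel₀ _ ha.ne']; linarith⟩
  have hlim : Tendsto (fun t => ∫ s in Ioi 0, (A t).indicator
      (fun s => (1 + s ^ a / t) ^ (-t) * s ^ p) s) atTop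
      (𝓝 (∫ s in Ioi 0, exp (-s ^ a) * s ^ p)) := by
    refine tendsto_integral_filter_of_dominated_convergence _
      (Eventually.of_forall fun t =>
        ((Measurable.indicator (by fun_prop) (hA_meas t)).aestronglyMeasurable))
      ?_ (integrableOn_one_add_rpow_div_rpow_neg_mul_rpow hp ht₀ hpt₀) ?_
    · filter_upwards [eventually_ge_atTop t₀] with t ht
      filter_upwards [ae_restrict_mem measurableSet_Ioi] with s (hs : 0 < s)
      have ht_pos : 0 < t := ht₀.trans_le ht
      have hg : 0 ≤ (1 + s ^ a / t₀) ^ (-t₀) * s ^ p := by positivity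
      rw [norm_indicator_eq_indicator_norm]
      refine indicator_apply_le' (fun _ => ?_) fun _ => hg
      rw [norm_of_nonneg (by positivity)]
      gcongr
      exact one_add_div_rpow_neg_le_of_le (by positivity) ht₀ ht
    · filter_upwards [ae_restrict_mem measurableSet_Ioi] with s (hs : 0 < s)
      have h := ((tendsto_one_add_div_rpow_exp (s ^ a)).inv₀ (exp_ne_zero _)).mul_const (s ^ p)
      rw [← exp_neg] at h
      refine h.congr' ?_
      filter_upwards [eventually_gt_atTop 0, hA s hs] with t ht hst
      rw [indicator_of_mem hst, rpow_neg (by positivity)]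
  have hgamma : ∫ s in Ioi 0, exp (-s ^ a) * s ^ p = (1 / a) * Gamma ((p + 1) / a) := by
    simp_rw [mul_comm (exp _)]
    exact integral_rpow_mul_exp_neg_rpow ha hp
  rw [← hgamma]
  refine hlim.congr' ?_
  filter_upwards [hA_pos] with t ht
  rw [setIntegral_indicator (hA_meas t), inter_eq_right.2 ht]

theorem rpow_mul_setIntegral_one_add_rpow_rpow_neg_mul_rpow (ha : 0 < a) (ht : 0 < t)
    {S : Set ℝ} (hS_meas : MeasurableSet S) (hS_pos : S ⊆ Ioi 0) :
    t ^ ((p + 1) / a) * ∫ r in S, (1 + r ^ a) ^ (-t) * r ^ p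
      = ∫ s in t ^ (1 / a) • S, (1 + s ^ a / t) ^ (-t) * s ^ p := by
  set c := t ^ (1 / a)
  have hc : 0 < c := rpow_pos_of_pos ht _
  have hca : c ^ a = t := by rw [← rpow_mul ht.le, one_div_mul_cancel ha.ne', rpow_one]
  have hcp : c ^ (p + 1) = t ^ ((p + 1) / a) := by rw [← rpow_mul ht.le]; ring_nf
  have hscale := Measure.setIntegral_comp_smul_of_pos volume
    (fun r => (1 + r ^ a) ^ (-t) * r ^ p) (c • S) (inv_pos.2 hc)
  rw [inv_smul_smul₀ hc.ne', Module.finrank_self, pow_one, inv_inv, smul_eq_mul] at hscale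
  rw [← hcp, rpow_add_one hc.ne', mul_assoc, ← hscale, ← integral_const_mul]
  refine setIntegral_congr_fun (hS_meas.const_smul₀ c) fun s hs => ?_
  have hs₀ : 0 < s := by
    obtain ⟨r, hr, rfl⟩ := hs
    exact mul_pos hc (hS_pos hr)
  rw [smul_eq_mul, mul_rpow (by positivity) hs₀.le, mul_rpow (by positivity) hs₀.le,
    inv_rpow hc.le, inv_rpow hc.le, hca]
  field_simp

theorem tendsto_rpow_mul_setIntegral_one_add_rpow_rpow_neg_mul_rpow (ha : 0 < a) (hp : -1 < p)
    {S : Set ℝ} (hS_meas : MeasurableSet S) (hS_pos : S ⊆ Ioi 0) (hS : S ∈ 𝓝[>] 0) :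
    Tendsto (fun t : ℝ => t ^ ((p + 1) / a) * ∫ r in S, (1 + r ^ a) ^ (-t) * r ^ p) atTop
      (𝓝 ((1 / a) * Gamma ((p + 1) / a))) := by
  have hc : Tendsto (fun t : ℝ => t ^ (1 / a)) atTop atTop := tendsto_rpow_atTop (by positivity)
  have hA_pos : ∀ᶠ t : ℝ in atTop, t ^ (1 / a) • S ⊆ Ioi 0 := by
    filter_upwards [hc.eventually_gt_atTop 0] with t ht
    rintro _ ⟨r, hr, rfl⟩
    exact mul_pos ht (hS_pos hr)
  have hA : ∀ s, 0 < s → ∀ᶠ t : ℝ in atTop, s ∈ t ^ (1 / a) • S := by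
    intro s hs
    have hshrink : Tendsto (fun t => (t ^ (1 / a) / s)⁻¹) atTop (𝓝[>] 0) :=
      tendsto_inv_atTop_nhdsGT_zero.comp (hc.atTop_div_const hs)
    filter_upwards [hc.eventually_gt_atTop 0, hshrink hS] with t ht hmem
    rwa [mem_smul_set_iff_inv_smul_mem₀ ht.ne', smul_eq_mul, inv_mul_eq_div, ← inv_div]
  refine (tendsto_setIntegral_one_add_rpow_div_rpow_neg_mul_rpow ha hp
    (fun t => hS_meas.const_smul₀ _) hA_pos hA).congr' ?_
  filter_upwards [eventually_gt_atTop 0] with t ht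
  exact (rpow_mul_setIntegral_one_add_rpow_rpow_neg_mul_rpow ha ht hS_meas hS_pos).symm

end

/-- Corollary 2.1, formula (2.5): for `θ > 0`, `p > -1` and any `0 < η₂ ≤ ∞`,
`t^{(p+1)/(2θ)} ∫₀^{η₂} (1+r^{2θ})^{-t} r^p dr → Γ((p+1)/(2θ))/(2θ)` as `t → ∞`. -/
theorem stmt_2 (θ p : ℝ) (hθ : 0 < θ) (hp : -1 < p) (η₂ : EReal) (hη₂ : 0 < η₂) :
    Tendsto (fun t : ℝ => t ^ ((p + 1) / (2 * θ)) *
        ∫ r in {r : ℝ | 0 < r ∧ (r : EReal) < η₂}, (1 + r ^ (2 * θ)) ^ (-t) * r ^ p)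
      atTop (nhds ((1 / (2 * θ)) * Real.Gamma ((p + 1) / (2 * θ)))) := by
  have h_meas : MeasurableSet {r : ℝ | 0 < r ∧ (r : EReal) < η₂} :=
    measurableSet_Ioi.inter (measurableSet_lt measurable_coe_real_ereal measurable_const)
  have h_nhds : {r : ℝ | 0 < r ∧ (r : EReal) < η₂} ∈ 𝓝[>] 0 :=
    inter_mem_nhdsWithin _ (continuous_coe_real_ereal.continuousAt.preimage_mem_nhds
      (Iio_mem_nhds (by simpa using hη₂)))
  exact tendsto_rpow_mul_setIntegral_one_add_rpow_rpow_neg_mul_rpow (by positivity) hp h_meas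
    (fun _ hr => hr.1) h_nhds
end

section
/- Let θ > 0, p ∈ ℝ and 0 < η < η₂ ≤ ∞. Then lim_{t→∞} (1+η^{2θ})^{t−1} · t · ∫_{η}^{η₂} (1+r^{2θ})^{−t} r^{p} dr = η^{p+1−2θ}/(2θ). -/
/-!
Substituting `s = r ^ k` (here `k = 2θ`) and then `1 + s = (1 + η ^ k) e ^ y` turns
`(1 + η ^ k) ^ (t - 1) t ∫_η^∞ (1 + r ^ k) ^ (-t) r ^ p dr` into `t ∫_0^∞ e ^ (-t y) g y dy` with
`g 0 = η ^ (p + 1 - k) / k`. Rescaling `y = x / t` makes this `∫_0^∞ e ^ (-x) g (x / t) dx`,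
which tends to `g 0` by dominated convergence since `g` grows at most exponentially.
For finite `η₂` the integral over `(η₂, ∞)` carries the extra factor
`((1 + η ^ k) / (1 + η₂ ^ k)) ^ (t - 1) → 0`.
-/

open MeasureTheory Filter Real Set Topology

theorem tendsto_integral_exp_neg_mul_comp_div {g : ℝ → ℝ} {C a : ℝ}
    (hg : ContinuousOn g (Ici 0)) (hbound : ∀ y, 0 ≤ y → ‖g y‖ ≤ C * exp (a * y)) :
    Tendsto (fun t => ∫ x in Ioi 0, exp (-x) * g (x / t)) atTop (𝓝 (g 0)) := by
  have hC : 0 ≤ C := by simpa using (norm_nonneg _).trans (hbound 0 le_rfl)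
  have hintegral : ∫ x in Ioi (0 : ℝ), exp (-x) * g 0 = g 0 := by
    rw [integral_mul_const, integral_exp_neg_Ioi_zero, one_mul]
  rw [← hintegral]
  refine tendsto_integral_filter_of_dominated_convergence (fun x => C * exp (-(1 / 2) * x))
    ?_ ?_ ((exp_neg_integrableOn_Ioi 0 one_half_pos).const_mul C) ?_
  · filter_upwards [eventually_gt_atTop 0] with t ht
    refine ContinuousOn.aestronglyMeasurable ?_ measurableSet_Ioi
    refine (continuous_exp.comp continuous_neg).continuousOn.mul
      (hg.comp (continuousOn_id.div_const t) fun x hx => ?_)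
    exact div_nonneg (le_of_lt hx) ht.le
  · filter_upwards [eventually_ge_atTop (2 * |a|), eventually_gt_atTop 0] with t hta ht
    refine (ae_restrict_iff' measurableSet_Ioi).2 (ae_of_all _ fun x (hx : 0 < x) => ?_)
    have hax : a * (x / t) ≤ x / 2 := by
      calc a * (x / t) ≤ |a| * (x / t) := by gcongr; exact le_abs_self a
        _ ≤ t / 2 * (x / t) := by gcongr; linarith
        _ = x / 2 := by field_simp
    calc ‖exp (-x) * g (x / t)‖ = exp (-x) * ‖g (x / t)‖ := by
          rw [norm_mul, norm_of_nonneg (exp_pos _).le]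
      _ ≤ exp (-x) * (C * exp (x / 2)) := by
          gcongr
          exact (hbound _ (by positivity)).trans (by gcongr)
      _ = C * exp (-(1 / 2) * x) := by
          rw [mul_left_comm, ← exp_add]; ring_nf
  · refine (ae_restrict_iff' measurableSet_Ioi).2 (ae_of_all _ fun x (hx : 0 < x) => ?_)
    have hdiv : Tendsto (fun t => x / t) atTop (𝓝[Ici 0] 0) :=
      tendsto_nhdsWithin_iff.2 ⟨tendsto_const_nhds.div_atTop tendsto_id,
        (eventually_gt_atTop 0).mono fun t ht => div_nonneg hx.le ht.le⟩
    exact ((hg 0 self_mem_Ici).tendsto.comp hdiv).const_mul _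

theorem tendsto_mul_integral_exp_neg_mul {g : ℝ → ℝ} {C a : ℝ}
    (hg : ContinuousOn g (Ici 0)) (hbound : ∀ y, 0 ≤ y → ‖g y‖ ≤ C * exp (a * y)) :
    Tendsto (fun t => t * ∫ y in Ioi 0, exp (-(t * y)) * g y) atTop (𝓝 (g 0)) := by
  refine (tendsto_integral_exp_neg_mul_comp_div hg hbound).congr' ?_
  filter_upwards [eventually_gt_atTop 0] with t ht
  have := integral_comp_mul_left_Ioi (fun y => exp (-(t * y)) * g y) 0 (inv_pos.2 ht)
  simp only [mul_zero, inv_inv, smul_eq_mul, mul_inv_cancel_left₀ ht.ne'] at this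
  simpa [div_eq_inv_mul] using this

theorem image_mul_exp_sub_one_Ioi {A : ℝ} (hA : 0 < A) :
    (fun y => A * exp y - 1) '' Ioi 0 = Ioi (A - 1) := by
  ext s
  constructor
  · rintro ⟨y, hy, rfl⟩
    have : 1 < exp y := one_lt_exp_iff.2 hy
    show A - 1 < A * exp y - 1
    nlinarith
  · intro (hs : A - 1 < s)
    have hsA : 1 < (s + 1) / A := by rw [lt_div_iff₀ hA]; linarith
    refine ⟨log ((s + 1) / A), log_pos hsA, ?_⟩
    dsimp only
    rw [exp_log (by linarith), mul_div_cancel₀ _ hA.ne']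
    ring

theorem integral_Ioi_one_add_rpow_neg_mul {c : ℝ} (hc : -1 < c) (t : ℝ) (h : ℝ → ℝ) :
    ∫ s in Ioi c, (1 + s) ^ (-t) * h s =
      (1 + c) ^ (1 - t) * ∫ y in Ioi 0, exp (-(t * y)) * (exp y * h ((1 + c) * exp y - 1)) := by
  have hA : 0 < 1 + c := by linarith
  have himage := image_mul_exp_sub_one_Ioi hA
  rw [add_sub_cancel_left] at himage
  rw [← himage, integral_image_eq_integral_abs_deriv_smul measurableSet_Ioi
    (fun y _ => (((hasDerivAt_exp y).const_mul (1 + c)).sub_const 1).hasDerivWithinAt)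
    (fun x _ y _ hxy => exp_injective (mul_left_cancel₀ hA.ne' (sub_left_injective hxy))),
    ← integral_const_mul]
  refine setIntegral_congr_fun measurableSet_Ioi fun y _ => ?_
  have hpow : (1 + ((1 + c) * exp y - 1)) ^ (-t) = (1 + c) ^ (-t) * exp (-(t * y)) := by
    rw [add_sub_cancel, mul_rpow hA.le (exp_pos y).le, ← exp_mul]
    ring_nf
  rw [smul_eq_mul, abs_of_pos (by positivity), hpow, rpow_sub hA, rpow_one, rpow_neg hA.le]
  field_simp

theorem tendsto_mul_integral_Ioi_one_add_rpow_neg_mul {c C a : ℝ} {h : ℝ → ℝ} (hc : -1 < c)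
    (hh : ContinuousOn h (Ici c)) (hbound : ∀ s, c ≤ s → ‖h s‖ ≤ C * (1 + s) ^ a) :
    Tendsto (fun t => (1 + c) ^ (t - 1) * t * ∫ s in Ioi c, (1 + s) ^ (-t) * h s)
      atTop (𝓝 (h c)) := by
  have hA : 0 < 1 + c := by linarith
  have hmaps : MapsTo (fun y => (1 + c) * exp y - 1) (Ici 0) (Ici c) := fun y (hy : 0 ≤ y) => by
    have := one_le_exp hy
    show c ≤ (1 + c) * exp y - 1
    nlinarith
  have hg : ContinuousOn (fun y => exp y * h ((1 + c) * exp y - 1)) (Ici 0) :=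
    continuous_exp.continuousOn.mul (hh.comp (by fun_prop) hmaps)
  have hgbound : ∀ y, 0 ≤ y →
      ‖exp y * h ((1 + c) * exp y - 1)‖ ≤ C * (1 + c) ^ a * exp ((1 + a) * y) := by
    intro y hy
    calc ‖exp y * h ((1 + c) * exp y - 1)‖ = exp y * ‖h ((1 + c) * exp y - 1)‖ := by
          rw [norm_mul, norm_of_nonneg (exp_pos y).le]
      _ ≤ exp y * (C * ((1 + c) * exp y) ^ a) := by
          gcongr
          simpa using hbound _ (hmaps hy)
      _ = C * (1 + c) ^ a * exp ((1 + a) * y) := by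
          rw [mul_rpow hA.le (exp_pos y).le, ← exp_mul, mul_comm y a, add_mul, one_mul, exp_add]
          ring
  have := tendsto_mul_integral_exp_neg_mul hg hgbound
  simp only [exp_zero, one_mul, mul_one, add_sub_cancel_left] at this
  refine this.congr fun t => ?_
  rw [integral_Ioi_one_add_rpow_neg_mul hc, mul_mul_mul_comm, ← rpow_add hA]
  simp

theorem integral_Ioi_one_add_rpow_neg_mul_rpow {k η : ℝ} (hk : 0 < k) (hη : 0 ≤ η) (t p : ℝ) :
    ∫ r in Ioi η, (1 + r ^ k) ^ (-t) * r ^ p =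
      ∫ s in Ioi (η ^ k), (1 + s) ^ (-t) * (s ^ ((p + 1) / k - 1) / k) := by
  rw [← integral_comp_rpow_Ioi_of_pos' hk (rpow_nonneg hη k), rpow_rpow_inv hη hk.ne']
  refine setIntegral_congr_fun measurableSet_Ioi fun r (hr : η < r) => ?_
  have hr0 : 0 < r := hη.trans_lt hr
  have hexp : r ^ (k - 1) * (r ^ k) ^ ((p + 1) / k - 1) = r ^ p := by
    rw [← rpow_mul hr0.le, ← rpow_add hr0]
    congr 1
    field_simp
    ring
  rw [smul_eq_mul, ← hexp]
  field_simp

theorem exists_norm_rpow_le_one_add_rpow {c : ℝ} (hc : 0 < c) (q : ℝ) :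
    ∃ C a : ℝ, ∀ s, c ≤ s → ‖s ^ q‖ ≤ C * (1 + s) ^ a := by
  rcases le_total 0 q with hq | hq
  · refine ⟨1, q, fun s hs => ?_⟩
    have hs0 : 0 ≤ s := hc.le.trans hs
    rw [one_mul, norm_of_nonneg (rpow_nonneg hs0 q)]
    exact rpow_le_rpow hs0 (by linarith) hq
  · refine ⟨c ^ q, 0, fun s hs => ?_⟩
    rw [rpow_zero, mul_one, norm_of_nonneg (rpow_nonneg (hc.le.trans hs) q)]
    exact rpow_le_rpow_of_nonpos hc hs hq

theorem tendsto_mul_integral_Ioi_one_add_rpow_neg_mul_rpow {k η : ℝ} (hk : 0 < k) (hη : 0 < η)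
    (p : ℝ) :
    Tendsto (fun t => (1 + η ^ k) ^ (t - 1) * t * ∫ r in Ioi η, (1 + r ^ k) ^ (-t) * r ^ p)
      atTop (𝓝 (η ^ (p + 1 - k) / k)) := by
  have hc : 0 < η ^ k := rpow_pos_of_pos hη k
  obtain ⟨C, a, hbound⟩ := exists_norm_rpow_le_one_add_rpow hc ((p + 1) / k - 1)
  have hlim : (η ^ k) ^ ((p + 1) / k - 1) / k = η ^ (p + 1 - k) / k := by
    rw [← rpow_mul hη.le]
    congr 2
    field_simp
  simp only [integral_Ioi_one_add_rpow_neg_mul_rpow hk hη.le, ← hlim]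
  refine tendsto_mul_integral_Ioi_one_add_rpow_neg_mul (C := C / k) (a := a) (by linarith)
    ((continuousOn_id.rpow_const fun s hs => Or.inl (hc.trans_le hs).ne').div_const k)
    fun s hs => ?_
  rw [norm_div, norm_of_nonneg hk.le, div_mul_eq_mul_div]
  exact div_le_div_of_nonneg_right (hbound s hs) hk.le

theorem integrableOn_Ioi_one_add_rpow_neg_mul_rpow {k η t p : ℝ} (hη : 0 < η)
    (ht : 0 ≤ t) (hpt : p + 1 < k * t) :
    IntegrableOn (fun r => (1 + r ^ k) ^ (-t) * r ^ p) (Ioi η) := by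
  refine (integrableOn_Ioi_rpow_of_lt (by linarith : p - k * t < -1) hη).mono' ?_ ?_
  · refine ContinuousOn.aestronglyMeasurable (fun r (hr : η < r) => ?_) measurableSet_Ioi
    have hr0 : 0 < r := hη.trans hr
    have hbase : 1 + r ^ k ≠ 0 := (add_pos one_pos (rpow_pos_of_pos hr0 k)).ne'
    have hpow (e : ℝ) : ContinuousAt (· ^ e) r := continuousAt_rpow_const r e (Or.inl hr0.ne')
    exact (((continuousAt_const.add (hpow k)).rpow_const (Or.inl hbase)).mul
      (hpow p)).continuousWithinAt
  · refine (ae_restrict_iff' measurableSet_Ioi).2 (ae_of_all _ fun r (hr : η < r) => ?_)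
    have hr0 : 0 < r := hη.trans hr
    calc ‖(1 + r ^ k) ^ (-t) * r ^ p‖ = (1 + r ^ k) ^ (-t) * r ^ p :=
          norm_of_nonneg (by positivity)
      _ ≤ (r ^ k) ^ (-t) * r ^ p := by
          gcongr ?_ * _
          exact rpow_le_rpow_of_nonpos (by positivity) (by linarith) (by linarith)
      _ = r ^ (p - k * t) := by
          rw [← rpow_mul hr0.le, ← rpow_add hr0]
          ring_nf

theorem tendsto_mul_integral_Ioi_one_add_rpow_neg_mul_rpow_zero_of_lt {k η b : ℝ} (hk : 0 < k)
    (hη : 0 < η) (hb : η < b) (p : ℝ) :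
    Tendsto (fun t => (1 + η ^ k) ^ (t - 1) * t * ∫ r in Ioi b, (1 + r ^ k) ^ (-t) * r ^ p)
      atTop (𝓝 0) := by
  have hb0 : 0 < b := hη.trans hb
  have hA : 0 < 1 + η ^ k := by positivity
  have hB : 0 < 1 + b ^ k := by positivity
  have hAB : (1 + η ^ k) / (1 + b ^ k) < 1 := by
    rw [div_lt_one hB, add_lt_add_iff_left]
    exact rpow_lt_rpow hη.le hb hk
  have hshift : Tendsto (fun t : ℝ => t - 1) atTop atTop := by
    simpa only [sub_eq_add_neg, id] using tendsto_atTop_add_const_right atTop (-1 : ℝ) tendsto_id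
  have hratio : Tendsto (fun t : ℝ => ((1 + η ^ k) / (1 + b ^ k)) ^ (t - 1)) atTop (𝓝 0) :=
    (tendsto_rpow_atTop_of_base_lt_one _ (neg_one_lt_zero.trans (div_pos hA hB)) hAB).comp hshift
  have := hratio.mul (tendsto_mul_integral_Ioi_one_add_rpow_neg_mul_rpow hk hb0 p)
  rw [zero_mul] at this
  refine this.congr fun t => ?_
  rw [div_rpow hA.le hB.le]
  field_simp

theorem tendsto_mul_integral_Ioo_one_add_rpow_neg_mul_rpow {k η b : ℝ} (hk : 0 < k)
    (hη : 0 < η) (hb : η < b) (p : ℝ) :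
    Tendsto (fun t => (1 + η ^ k) ^ (t - 1) * t * ∫ r in Ioo η b, (1 + r ^ k) ^ (-t) * r ^ p)
      atTop (𝓝 (η ^ (p + 1 - k) / k)) := by
  have := (tendsto_mul_integral_Ioi_one_add_rpow_neg_mul_rpow hk hη p).sub
    (tendsto_mul_integral_Ioi_one_add_rpow_neg_mul_rpow_zero_of_lt hk hη hb p)
  rw [sub_zero] at this
  refine this.congr' ?_
  filter_upwards [eventually_gt_atTop ((p + 1) / k), eventually_ge_atTop 0] with t hpt ht
  rw [div_lt_iff₀' hk] at hpt
  rw [← mul_sub, intervalIntegral.integral_Ioi_sub_Ioi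
    (integrableOn_Ioi_one_add_rpow_neg_mul_rpow hη ht hpt) hb.le,
    intervalIntegral.integral_of_le hb.le, integral_Ioc_eq_integral_Ioo]

/-- Corollary 2.1, formula (2.6): for `θ > 0`, `p ∈ ℝ` and `0 < η < η₂ ≤ ∞`,
`(1+η^{2θ})^{t-1} t ∫_η^{η₂} (1+r^{2θ})^{-t} r^p dr → η^{p+1-2θ}/(2θ)` as `t → ∞`. -/
theorem stmt_3 (θ p η : ℝ) (hθ : 0 < θ) (hη : 0 < η) (η₂ : EReal) (hη₂ : (η : EReal) < η₂) :
    Tendsto (fun t : ℝ => (1 + η ^ (2 * θ)) ^ (t - 1) * t *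
        ∫ r in {r : ℝ | η < r ∧ (r : EReal) < η₂}, (1 + r ^ (2 * θ)) ^ (-t) * r ^ p)
      atTop (nhds (η ^ (p + 1 - 2 * θ) / (2 * θ))) := by
  have hk : 0 < 2 * θ := by positivity
  induction η₂ using EReal.rec with
  | bot => exact absurd hη₂ not_lt_bot
  | top =>
    simp only [EReal.coe_lt_top, and_true]
    exact tendsto_mul_integral_Ioi_one_add_rpow_neg_mul_rpow hk hη p
  | coe b =>
    have hb : η < b := EReal.coe_lt_coe_iff.1 hη₂
    simp only [EReal.coe_lt_coe_iff]
    exact tendsto_mul_integral_Ioo_one_add_rpow_neg_mul_rpow hk hη hb p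
end

section
/- Let a, b ∈ ℂ and let λ₊, λ₋ be the two roots (counted with multiplicity) of λ² + aλ + b = 0, labeled so that Re λ₋ ≤ Re λ₊, and assume Re λ₊ < 0. Let y : [0,∞) → ℂ be twice differentiable with y''(t) + a y'(t) + b y(t) = 0 for all t ≥ 0, y(0) = 0, y'(0) = y₁. Then for every t ≥ 0: |y(t)| ≤ e^{(Re λ₊) t} · t · |y₁| and |y'(t)| ≤ e^{(Re λ₊) t} (1 + t |λ₋|) |y₁|. -/
/-!
The operator factors as `(D - λ₊)(D - λ₋)`, so `u = y' - λ₋ y` solves `u' = λ₊ u`, `u(0) = y₁`,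
hence `u(t) = e^{λ₊ t} y₁`. Variation of constants then gives
`y(t) = ∫₀ᵗ e^{λ₋ (t - s)} e^{λ₊ s} y₁ ds`, and since `Re λ₋ ≤ Re λ₊` every integrand has modulus
at most `e^{(Re λ₊) t} |y₁|`. The bound on `y' = λ₋ y + e^{λ₊ t} y₁` follows.
-/

open Complex Set

lemma hasDerivAt_cexp_mul_ofReal (c : ℂ) (s : ℝ) :
    HasDerivAt (fun s : ℝ => exp (c * s)) (c * exp (c * s)) s := by
  simpa [mul_comm] using ((hasDerivAt_id s).ofReal_comp.const_mul c).cexp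

lemma norm_cexp_mul_ofReal (c : ℂ) (s : ℝ) : ‖exp (c * s)‖ = Real.exp (c.re * s) := by
  rw [norm_exp, mul_comm, re_ofReal_mul, mul_comm]

section LinearODE

variable {E : Type*} [NormedAddCommGroup E] [NormedSpace ℂ E]

lemma hasDerivAt_cexp_neg_mul_smul {u : ℝ → E} {u' : E} {s : ℝ} (c : ℂ)
    (hu : HasDerivAt u u' s) :
    HasDerivAt (fun s : ℝ => exp (-c * (s : ℂ)) • u s) (exp (-c * (s : ℂ)) • (u' - c • u s)) s := by
  refine ((hasDerivAt_cexp_mul_ofReal (-c) s).smul hu).congr_deriv ?_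
  module

lemma eq_cexp_mul_smul_of_hasDerivAt {u : ℝ → E} {c : ℂ}
    (hu : ∀ s ≥ 0, HasDerivAt u (c • u s) s) {t : ℝ} (ht : 0 ≤ t) :
    u t = exp (c * t) • u 0 := by
  have hderiv : ∀ s ∈ Icc 0 t,
      HasDerivWithinAt (fun s : ℝ => exp (-c * (s : ℂ)) • u s) 0 (Icc 0 t) s := fun s hs => by
    simpa using (hasDerivAt_cexp_neg_mul_smul c (hu s hs.1)).hasDerivWithinAt
  have hconst := norm_image_sub_le_of_norm_deriv_le_segment' hderiv
    (fun _ _ => norm_zero.le) t (right_mem_Icc.2 ht)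
  rw [zero_mul, norm_le_zero_iff, sub_eq_zero] at hconst
  simp only [ofReal_zero, mul_zero, exp_zero, one_smul] at hconst
  rw [← hconst, smul_smul, ← exp_add, neg_mul, add_neg_cancel, exp_zero, one_smul]

lemma norm_le_of_hasDerivAt_smul_add_cexp {v : ℝ → E} {c d : ℂ} {w : E} (hcd : c.re ≤ d.re)
    (hv0 : v 0 = 0) (hv : ∀ s ≥ 0, HasDerivAt v (c • v s + exp (d * s) • w) s)
    {t : ℝ} (ht : 0 ≤ t) :
    ‖v t‖ ≤ Real.exp (d.re * t) * t * ‖w‖ := by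
  have hderiv : ∀ s ∈ Icc 0 t, HasDerivWithinAt (fun s : ℝ => exp (-c * (s : ℂ)) • v s)
      (exp ((d - c) * s) • w) (Icc 0 t) s := fun s hs => by
    convert (hasDerivAt_cexp_neg_mul_smul c (hv s hs.1)).hasDerivWithinAt using 1
    rw [add_sub_cancel_left, smul_smul, ← exp_add]
    ring_nf
  have hbound : ∀ s ∈ Ico 0 t, ‖exp ((d - c) * s) • w‖ ≤ Real.exp ((d - c).re * t) * ‖w‖ :=
    fun s hs => by
      rw [norm_smul, norm_cexp_mul_ofReal]
      gcongr
      · simpa using hcd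
      · exact hs.2.le
  have hmvt := norm_image_sub_le_of_norm_deriv_le_segment' hderiv hbound t (right_mem_Icc.2 ht)
  simp only [hv0, smul_zero, sub_zero, norm_smul, norm_cexp_mul_ofReal] at hmvt
  calc ‖v t‖ = Real.exp (c.re * t) * (Real.exp ((-c).re * t) * ‖v t‖) := by
        rw [← mul_assoc, ← Real.exp_add, neg_re, neg_mul, add_neg_cancel, Real.exp_zero, one_mul]
    _ ≤ Real.exp (c.re * t) * (Real.exp ((d - c).re * t) * ‖w‖ * t) := by gcongr
    _ = Real.exp (d.re * t) * t * ‖w‖ := by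
        rw [sub_re, sub_mul, Real.exp_sub]
        field_simp

end LinearODE

theorem stmt_6_general (a b y₁ lp lm : ℂ)
    (hrootp : lp ^ 2 + a * lp + b = 0)
    (hsum : lp + lm = -a)
    (hre : lm.re ≤ lp.re)
    (y y' y'' : ℝ → ℂ)
    (hy1 : ∀ t ≥ (0 : ℝ), HasDerivAt y (y' t) t)
    (hy2 : ∀ t ≥ (0 : ℝ), HasDerivAt y' (y'' t) t)
    (hode : ∀ t ≥ (0 : ℝ), y'' t + a * y' t + b * y t = 0)
    (hy0 : y 0 = 0) (hy0' : y' 0 = y₁) :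
    ∀ t ≥ (0 : ℝ),
      ‖y t‖ ≤ Real.exp (lp.re * t) * t * ‖y₁‖ ∧
      ‖y' t‖ ≤ Real.exp (lp.re * t) * (1 + t * ‖lm‖) * ‖y₁‖ := by
  have hu : ∀ s ≥ (0 : ℝ), HasDerivAt (fun s => y' s - lm * y s) (lp * (y' s - lm * y s)) s :=
    fun s hs => by
      refine ((hy2 s hs).sub ((hy1 s hs).const_mul lm)).congr_deriv ?_
      linear_combination hode s hs - y' s * hsum - y s * hrootp + lp * y s * hsum
  have hy't : ∀ s ≥ (0 : ℝ), y' s = lm * y s + exp (lp * s) * y₁ := fun s hs => by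
    have := eq_cexp_mul_smul_of_hasDerivAt hu hs
    simp only [smul_eq_mul, hy0, hy0', mul_zero, sub_zero] at this
    linear_combination this
  intro t ht
  have hyt : ‖y t‖ ≤ Real.exp (lp.re * t) * t * ‖y₁‖ :=
    norm_le_of_hasDerivAt_smul_add_cexp hre hy0 (fun s hs => hy't s hs ▸ hy1 s hs) ht
  refine ⟨hyt, ?_⟩
  calc ‖y' t‖ ≤ ‖lm‖ * ‖y t‖ + Real.exp (lp.re * t) * ‖y₁‖ := by
        rw [hy't t ht, ← norm_mul, ← norm_cexp_mul_ofReal, ← norm_mul]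
        exact norm_add_le _ _
    _ ≤ ‖lm‖ * (Real.exp (lp.re * t) * t * ‖y₁‖) + Real.exp (lp.re * t) * ‖y₁‖ := by gcongr
    _ = Real.exp (lp.re * t) * (1 + t * ‖lm‖) * ‖y₁‖ := by ring

/-- Lemma 3.1: if the roots `λ₊, λ₋` of `λ² + aλ + b = 0` (counted with multiplicity,
so `λ₊ + λ₋ = -a`) satisfy `Re λ₋ ≤ Re λ₊ < 0`, then any solution of
`y'' + a y' + b y = 0`, `y(0) = 0`, `y'(0) = y₁` satisfies
`|y(t)| ≤ e^{(Re λ₊) t} t |y₁|` and `|y'(t)| ≤ e^{(Re λ₊) t}(1 + t|λ₋|)|y₁|` for `t ≥ 0`. -/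
theorem stmt_6 (a b y₁ lp lm : ℂ)
    (hrootp : lp ^ 2 + a * lp + b = 0) (hrootm : lm ^ 2 + a * lm + b = 0)
    (hsum : lp + lm = -a)
    (hre : lm.re ≤ lp.re) (hneg : lp.re < 0)
    (y y' y'' : ℝ → ℂ)
    (hy1 : ∀ t ≥ (0 : ℝ), HasDerivAt y (y' t) t)
    (hy2 : ∀ t ≥ (0 : ℝ), HasDerivAt y' (y'' t) t)
    (hode : ∀ t ≥ (0 : ℝ), y'' t + a * y' t + b * y t = 0)
    (hy0 : y 0 = 0) (hy0' : y' 0 = y₁) :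
    ∀ t ≥ (0 : ℝ),
      ‖y t‖ ≤ Real.exp (lp.re * t) * t * ‖y₁‖ ∧
      ‖y' t‖ ≤ Real.exp (lp.re * t) * (1 + t * ‖lm‖) * ‖y₁‖ :=
  stmt_6_general a b y₁ lp lm hrootp hsum hre y y' y'' hy1 hy2 hode hy0 hy0'
end

section
/- Let θ ≥ 1/2 and δ > 0. Then there exists γ > 0 such that for every real r ≥ δ, every complex root λ of the equation λ² + log(1 + r^{2θ}) λ + r^{2θ} = 0 satisfies Re λ ≤ −γ. -/
/-- For `θ ≥ 1/2` and `δ > 0` there exists `γ > 0` such that for every `r ≥ δ`, every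
complex root `λ` of `λ² + log(1 + r^{2θ}) λ + r^{2θ} = 0` satisfies `Re λ ≤ -γ`. -/
theorem stmt_7 (θ δ : ℝ) (hθ : 1 / 2 ≤ θ) (hδ : 0 < δ) :
    ∃ γ > (0 : ℝ), ∀ r : ℝ, δ ≤ r → ∀ l : ℂ,
      l ^ 2 + (Real.log (1 + r ^ (2 * θ)) : ℂ) * l + (r ^ (2 * θ) : ℝ) = 0 →
      l.re ≤ -γ := by
  have hc₀pos : 0 < δ ^ (2 * θ) := Real.rpow_pos_of_pos hδ _
  have hb₀pos : 0 < Real.log (1 + δ ^ (2 * θ)) := Real.log_pos (by linarith)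
  refine ⟨min (Real.log (1 + δ ^ (2 * θ)) / 2) 1, by positivity, ?_⟩
  intro r hr l hl
  set c := r ^ (2 * θ) with hc
  have hrpos : 0 < r := lt_of_lt_of_le hδ hr
  have hcpos : 0 < c := Real.rpow_pos_of_pos hrpos _
  have hcc : δ ^ (2 * θ) ≤ c := Real.rpow_le_rpow hδ.le hr (by linarith)
  set b := Real.log (1 + c) with hb
  have hbb : Real.log (1 + δ ^ (2 * θ)) ≤ b := Real.log_le_log (by linarith) (by linarith)
  have hbpos : 0 < b := lt_of_lt_of_le hb₀pos hbb
  have hble : b ≤ c := by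
    have := Real.log_le_sub_one_of_pos (show (0:ℝ) < 1 + c by linarith)
    linarith
  have hre : l.re ^ 2 - l.im ^ 2 + b * l.re + c = 0 := by
    have := congrArg Complex.re hl
    simp [pow_two, Complex.add_re, Complex.mul_re, Complex.mul_im] at this
    ring_nf at this ⊢
    linarith
  have him : l.im * (2 * l.re + b) = 0 := by
    have := congrArg Complex.im hl
    simp [pow_two, Complex.add_im, Complex.mul_re, Complex.mul_im] at this
    ring_nf at this ⊢
    linarith
  rcases mul_eq_zero.mp him with hy | hx
  · have h2 : l.re ^ 2 + b * l.re + c = 0 := by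
      rw [hy] at hre; nlinarith [hre]
    have hxneg : l.re < 0 := by nlinarith
    have hle1 : l.re ≤ -1 := by nlinarith
    have := min_le_right (Real.log (1 + δ ^ (2 * θ)) / 2) (1:ℝ)
    linarith
  · have hx' : l.re = -b / 2 := by linarith
    have := min_le_left (Real.log (1 + δ ^ (2 * θ)) / 2) (1:ℝ)
    linarith
end

section
/- Let n ≥ 1, θ > 1/2 and δ₁ > 0. Then there exist C > 0 and t₀ > 0 such that for all t ≥ t₀: ∫_{|ξ| ≥ δ₁} (1+|ξ|^{2θ})^{−t} · sin²(t|ξ|)/|ξ|² dξ ≤ C t^{−1} (1+δ₁^{2θ})^{−t}. In particular this integral is o(t^{−n/(2θ)}) as t → ∞. -/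
/-! Put `a = δ^s` with `s = 2θ`. Weighted AM–GM with weights `1/(1+a)` and `a/(1+a)` gives
`1 + r^s ≥ (1 + δ^s) (r/δ)^γ` for every `r > 0`, where `γ = s a/(1+a)`. So on `‖ξ‖ ≥ δ` the
integrand is at most `(1 + δ^s)^(-t) δ^(γt) ‖ξ‖^(-(γt+2))`, whose integral over `‖ξ‖ ≥ δ` is,
in polar coordinates, a multiple of `δ^(n-2) / (γt + 2 - n) = O(1/t)`. The factor
`(1 + δ^s)^(-t)` then decays faster than any power of `t`. -/

open MeasureTheory Filter
open Set Metric

noncomputable def tailDecayExponent (s δ : ℝ) : ℝ := s * (δ ^ s / (1 + δ ^ s))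

theorem tailDecayExponent_pos {s δ : ℝ} (hs : 0 < s) (hδ : 0 < δ) : 0 < tailDecayExponent s δ := by
  unfold tailDecayExponent
  positivity

theorem one_add_mul_rpow_div_le {a x : ℝ} (ha : 0 ≤ a) (hx : 0 ≤ x) :
    (1 + a) * x ^ (a / (1 + a)) ≤ 1 + a * x := by
  have h1a : 0 < 1 + a := by linarith
  have hamgm := Real.geom_mean_le_arith_mean2_weighted (p₁ := 1) (p₂ := x)
    (by positivity : 0 ≤ 1 / (1 + a)) (by positivity : 0 ≤ a / (1 + a)) zero_le_one hx
    (by field_simp)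
  rw [Real.one_rpow, one_mul] at hamgm
  calc (1 + a) * x ^ (a / (1 + a)) ≤ (1 + a) * (1 / (1 + a) * 1 + a / (1 + a) * x) := by gcongr
    _ = 1 + a * x := by field_simp

theorem one_add_rpow_rpow_neg_le {s δ r t : ℝ} (hδ : 0 < δ) (hr : 0 < r) (ht : 0 ≤ t) :
    (1 + r ^ s) ^ (-t) ≤ (1 + δ ^ s) ^ (-t) * (r / δ) ^ (-(tailDecayExponent s δ * t)) := by
  have hbase : (1 + δ ^ s) * (r / δ) ^ tailDecayExponent s δ ≤ 1 + r ^ s := by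
    have := one_add_mul_rpow_div_le (by positivity : 0 ≤ δ ^ s) (by positivity : 0 ≤ (r / δ) ^ s)
    rwa [← Real.rpow_mul (by positivity), ← Real.mul_rpow hδ.le (by positivity),
      mul_div_cancel₀ _ hδ.ne'] at this
  calc (1 + r ^ s) ^ (-t) ≤ ((1 + δ ^ s) * (r / δ) ^ tailDecayExponent s δ) ^ (-t) :=
        Real.rpow_le_rpow_of_nonpos (by positivity) hbase (neg_nonpos.mpr ht)
    _ = _ := by
        rw [Real.mul_rpow (by positivity) (by positivity), ← Real.rpow_mul (by positivity),
          mul_neg]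

theorem profile_sq_le_rpow_neg {s δ r t : ℝ} (hδ : 0 < δ) (hr : 0 < r) (ht : 0 ≤ t) :
    (1 + r ^ s) ^ (-t) * Real.sin (t * r) ^ 2 / r ^ 2 ≤
      (1 + δ ^ s) ^ (-t) * δ ^ (tailDecayExponent s δ * t) *
        r ^ (-(tailDecayExponent s δ * t + 2)) := by
  have hsin : Real.sin (t * r) ^ 2 ≤ 1 := Real.sin_sq_le_one _
  calc (1 + r ^ s) ^ (-t) * Real.sin (t * r) ^ 2 / r ^ 2
      ≤ (1 + δ ^ s) ^ (-t) * (r / δ) ^ (-(tailDecayExponent s δ * t)) * 1 / r ^ 2 := by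
        gcongr
        exact one_add_rpow_rpow_neg_le hδ hr ht
    _ = _ := by
        rw [Real.div_rpow hr.le hδ.le, Real.rpow_neg hδ.le, div_inv_eq_mul, neg_add,
          Real.rpow_add hr, Real.rpow_neg hr.le 2, Real.rpow_two]
        ring

theorem tendsto_mul_rpow_of_le_inv_mul_rpow_neg {F : ℝ → ℝ} {A C : ℝ} (hA : 1 < A)
    (hF₀ : ∀ᶠ t in atTop, 0 ≤ F t) (hF : ∀ᶠ t in atTop, F t ≤ C * t⁻¹ * A ^ (-t)) (e : ℝ) :
    Tendsto (fun t => F t * t ^ e) atTop (nhds 0) := by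
  have hlim : Tendsto (fun t : ℝ => C * (t ^ (e - 1) * Real.exp (-Real.log A * t)))
      atTop (nhds 0) := by
    simpa using (tendsto_rpow_mul_exp_neg_mul_atTop_nhds_zero (e - 1) _
      (Real.log_pos hA)).const_mul C
  refine squeeze_zero' ?_ ?_ hlim
  · filter_upwards [hF₀, eventually_ge_atTop 0] with t hFt ht
    positivity
  · filter_upwards [hF, eventually_gt_atTop 0] with t hFt ht
    have hexp : A ^ (-t) = Real.exp (-Real.log A * t) := by
      rw [Real.rpow_def_of_pos (by linarith)]; ring_nf
    have hpow : t⁻¹ * t ^ e = t ^ (e - 1) := by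
      rw [Real.rpow_sub_one ht.ne']; field_simp
    calc F t * t ^ e ≤ C * t⁻¹ * A ^ (-t) * t ^ e := by gcongr
      _ = _ := by rw [hexp, ← hpow]; ring

theorem indicator_setOf_le_norm_comp_norm {E F : Type*} [Norm E] [Zero F] (δ : ℝ) (f : ℝ → F) :
    {ξ : E | δ ≤ ‖ξ‖}.indicator (fun ξ => f ‖ξ‖) = fun ξ => (Ici δ).indicator f ‖ξ‖ := by
  ext ξ
  by_cases h : δ ≤ ‖ξ‖ <;> simp [indicator, h]

theorem eqOn_pow_smul_indicator_rpow_neg {δ p : ℝ} {d : ℕ} (hd : 1 ≤ d) :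
    EqOn (fun r : ℝ => r ^ (d - 1) • (Ici δ).indicator (fun r => r ^ (-p)) r)
      ((Ici δ).indicator fun r => r ^ ((d : ℝ) - 1 - p)) (Ioi 0) := by
  intro r (hr : 0 < r)
  by_cases h : δ ≤ r
  · simp only [indicator, mem_Ici, h, if_true, smul_eq_mul]
    rw [← Real.rpow_natCast, ← Real.rpow_add hr, Nat.cast_sub hd]
    ring_nf
  · simp [indicator, h]

section AddHaar

variable {E : Type*} [NormedAddCommGroup E] [NormedSpace ℝ E] [Nontrivial E]
  [FiniteDimensional ℝ E] [MeasurableSpace E] [BorelSpace E]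
  (μ : Measure E) [μ.IsAddHaarMeasure] {δ : ℝ}

theorem integrableOn_setOf_le_norm_norm_rpow_neg {p : ℝ} (hδ : 0 < δ)
    (hp : (Module.finrank ℝ E : ℝ) < p) :
    IntegrableOn (fun ξ : E => ‖ξ‖ ^ (-p)) {ξ | δ ≤ ‖ξ‖} μ := by
  rw [← integrable_indicator_iff (measurableSet_le measurable_const measurable_norm),
    indicator_setOf_le_norm_comp_norm δ fun r => r ^ (-p),
    integrable_fun_norm_addHaar μ (f := (Ici δ).indicator fun r => r ^ (-p)),
    integrableOn_congr_fun (eqOn_pow_smul_indicator_rpow_neg Module.finrank_pos)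
      measurableSet_Ioi]
  refine ((integrable_indicator_iff measurableSet_Ici).mpr ?_).integrableOn
  exact (integrableOn_Ici_iff_integrableOn_Ioi).2
    (integrableOn_Ioi_rpow_of_lt (by linarith : (Module.finrank ℝ E : ℝ) - 1 - p < -1) hδ)

theorem setIntegral_setOf_le_norm_norm_rpow_neg {p : ℝ} (hδ : 0 < δ)
    (hp : (Module.finrank ℝ E : ℝ) < p) :
    ∫ ξ in {ξ : E | δ ≤ ‖ξ‖}, ‖ξ‖ ^ (-p) ∂μ =
      Module.finrank ℝ E * μ.real (ball 0 1) *
        (δ ^ (Module.finrank ℝ E - p) / (p - Module.finrank ℝ E)) := by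
  rw [← integral_indicator (measurableSet_le measurable_const measurable_norm),
    indicator_setOf_le_norm_comp_norm δ fun r => r ^ (-p),
    integral_fun_norm_addHaar μ (f := (Ici δ).indicator fun r => r ^ (-p)),
    setIntegral_congr_fun measurableSet_Ioi
      (eqOn_pow_smul_indicator_rpow_neg Module.finrank_pos),
    setIntegral_indicator measurableSet_Ici, inter_eq_right.mpr (Ici_subset_Ioi.mpr hδ),
    integral_Ici_eq_integral_Ioi, integral_Ioi_rpow_of_lt (by linarith) hδ, nsmul_eq_mul,
    smul_eq_mul, show (Module.finrank ℝ E : ℝ) - 1 - p + 1 = Module.finrank ℝ E - p by ring,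
    neg_div, ← div_neg, neg_sub, mul_assoc]

theorem setIntegral_profile_sq_le {s t : ℝ} (hδ : 0 < δ) (ht : 0 ≤ t)
    (hdt : (Module.finrank ℝ E : ℝ) < tailDecayExponent s δ * t + 2) :
    ∫ ξ in {ξ : E | δ ≤ ‖ξ‖}, (1 + ‖ξ‖ ^ s) ^ (-t) * Real.sin (t * ‖ξ‖) ^ 2 / ‖ξ‖ ^ 2 ∂μ ≤
      Module.finrank ℝ E * μ.real (ball 0 1) * δ ^ ((Module.finrank ℝ E : ℝ) - 2) /
        (tailDecayExponent s δ * t + 2 - Module.finrank ℝ E) * (1 + δ ^ s) ^ (-t) := by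
  set γ := tailDecayExponent s δ
  set d : ℝ := (Module.finrank ℝ E : ℝ)
  have hS : MeasurableSet {ξ : E | δ ≤ ‖ξ‖} := measurableSet_le measurable_const measurable_norm
  calc ∫ ξ in {ξ : E | δ ≤ ‖ξ‖}, (1 + ‖ξ‖ ^ s) ^ (-t) * Real.sin (t * ‖ξ‖) ^ 2 / ‖ξ‖ ^ 2 ∂μ
      ≤ ∫ ξ in {ξ : E | δ ≤ ‖ξ‖}, (1 + δ ^ s) ^ (-t) * δ ^ (γ * t) * ‖ξ‖ ^ (-(γ * t + 2)) ∂μ := by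
        refine integral_mono_of_nonneg (.of_forall fun ξ => by positivity)
          ((integrableOn_setOf_le_norm_norm_rpow_neg μ hδ hdt).const_mul _)
          ((ae_restrict_iff' hS).mpr ?_)
        exact .of_forall fun ξ hξ => profile_sq_le_rpow_neg hδ (hδ.trans_le hξ) ht
    _ = _ := by
        have hpow : δ ^ (γ * t) * δ ^ (d - (γ * t + 2)) = δ ^ (d - 2) := by
          rw [← Real.rpow_add hδ]; ring_nf
        rw [integral_const_mul, setIntegral_setOf_le_norm_norm_rpow_neg μ hδ hdt, ← hpow]
        ring

theorem exists_setIntegral_profile_sq_le_inv_mul {s : ℝ} (hs : 0 < s) (hδ : 0 < δ) :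
    ∃ C > (0 : ℝ), ∃ t₀ > (0 : ℝ), ∀ t ≥ t₀,
      ∫ ξ in {ξ : E | δ ≤ ‖ξ‖}, (1 + ‖ξ‖ ^ s) ^ (-t) * Real.sin (t * ‖ξ‖) ^ 2 / ‖ξ‖ ^ 2 ∂μ ≤
        C * t⁻¹ * (1 + δ ^ s) ^ (-t) := by
  set γ := tailDecayExponent s δ
  set d : ℝ := (Module.finrank ℝ E : ℝ)
  have hγ : 0 < γ := tailDecayExponent_pos hs hδ
  have hd : 0 < d := Nat.cast_pos.mpr Module.finrank_pos
  have hK : 0 < d * μ.real (ball 0 1) :=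
    mul_pos hd (ENNReal.toReal_pos (measure_ball_pos μ 0 one_pos).ne' measure_ball_lt_top.ne)
  refine ⟨2 * (d * μ.real (ball 0 1) * δ ^ (d - 2)) / γ, by positivity, 2 * d / γ, by positivity,
    fun t ht => ?_⟩
  have hγt : 2 * d ≤ γ * t := by rwa [ge_iff_le, div_le_iff₀' hγ] at ht
  have ht0 : 0 < t := by nlinarith
  refine (setIntegral_profile_sq_le μ hδ ht0.le (by linarith)).trans ?_
  gcongr
  calc d * μ.real (ball 0 1) * δ ^ (d - 2) / (γ * t + 2 - d)
      ≤ d * μ.real (ball 0 1) * δ ^ (d - 2) / (γ * t / 2) := by gcongr; linarith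
    _ = _ := by field_simp

end AddHaar

/-- Proposition 3.3: the high-frequency part of the squared profile satisfies
`∫_{|ξ|≥δ₁} (1+|ξ|^{2θ})^{-t} sin²(t|ξ|)/|ξ|² dξ ≤ C t⁻¹ (1+δ₁^{2θ})^{-t}` for large `t`;
in particular it is `o(t^{-n/(2θ)})` as `t → ∞`. -/
theorem stmt_10 (n : ℕ) (hn : 1 ≤ n) (θ δ₁ : ℝ) (hθ : 1 / 2 < θ) (hδ : 0 < δ₁) :
    (∃ C > (0 : ℝ), ∃ t₀ > (0 : ℝ), ∀ t ≥ t₀,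
      (∫ ξ in {ξ : EuclideanSpace ℝ (Fin n) | δ₁ ≤ ‖ξ‖},
          (1 + ‖ξ‖ ^ (2 * θ)) ^ (-t) * Real.sin (t * ‖ξ‖) ^ 2 / ‖ξ‖ ^ 2) ≤
        C * t⁻¹ * (1 + δ₁ ^ (2 * θ)) ^ (-t)) ∧
    Tendsto (fun t : ℝ =>
        (∫ ξ in {ξ : EuclideanSpace ℝ (Fin n) | δ₁ ≤ ‖ξ‖},
          (1 + ‖ξ‖ ^ (2 * θ)) ^ (-t) * Real.sin (t * ‖ξ‖) ^ 2 / ‖ξ‖ ^ 2) *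
          t ^ ((n : ℝ) / (2 * θ)))
      atTop (nhds 0) := by
  have : Nonempty (Fin n) := ⟨⟨0, hn⟩⟩
  have hbound := exists_setIntegral_profile_sq_le_inv_mul
    (volume : Measure (EuclideanSpace ℝ (Fin n))) (by linarith : 0 < 2 * θ) hδ
  refine ⟨hbound, ?_⟩
  obtain ⟨C, -, t₀, -, hC⟩ := hbound
  have hA : 1 < 1 + δ₁ ^ (2 * θ) := lt_add_of_pos_right 1 (Real.rpow_pos_of_pos hδ _)
  exact tendsto_mul_rpow_of_le_inv_mul_rpow_neg hA
    (.of_forall fun t => integral_nonneg fun ξ => by positivity)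
    ((eventually_ge_atTop t₀).mono hC) _
end

section
/- Let n > 2 and θ ≥ 1/2. Then there exist t₀ > 0 and a constant C > 0 depending only on n and θ such that for all t ≥ t₀: C t^{−(n−2)/(2θ)} ≤ ∫_{ℝⁿ} e^{−t log(1+|ξ|^{2θ})} · sin²(|ξ|t)/|ξ|² dξ ≤ C^{−1} t^{−(n−2)/(2θ)}. -/
/-!
In polar coordinates the integral is a constant multiple of
`J(t) = ∫₀^∞ r^(n-3) (1 + r^(2θ))^(-t) sin²(rt) dr`.

Upper bound: drop `sin² ≤ 1`. Bernoulli's inequality gives `(1 + y)^(-t) ≤ (1 + (t/s) y)^(-s)` for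
`t ≥ s`, and the substitution `r ↦ (t/s)^(1/(2θ)) r` then shows that
`t^((n-2)/(2θ)) ∫₀^∞ r^(n-3) (1 + r^(2θ))^(-t) dr` is nonincreasing in `t`; it is finite once
`2θ t > n - 2`.

Lower bound: restrict to the shell `ε < r ≤ 5ε` with `ε = t^(-1/(2θ))`. There `t r^(2θ) ≤ 5^(2θ)`, so
the damping factor is at least `exp (-5^(2θ))`, and since `εt ≥ 1` (this is where `θ ≥ 1/2` enters)
`sin²(rt)` has average at least `1/4` over the shell.
-/

open MeasureTheory Real Set

lemma one_add_rpow_neg_le_one_add_mul_rpow_neg {s t y : ℝ} (hs : 0 < s) (hst : s ≤ t)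
    (hy : 0 ≤ y) : (1 + y) ^ (-t) ≤ (1 + t / s * y) ^ (-s) := by
  have ht : 0 < t := hs.trans_le hst
  have hbern : 1 + t / s * y ≤ (1 + y) ^ (t / s) :=
    one_add_mul_self_le_rpow_one_add (by linarith) ((one_le_div hs).2 hst)
  have hpow : (1 + t / s * y) ^ s ≤ (1 + y) ^ t :=
    calc (1 + t / s * y) ^ s ≤ ((1 + y) ^ (t / s)) ^ s :=
          rpow_le_rpow (by positivity) hbern hs.le
      _ = (1 + y) ^ t := by rw [← rpow_mul (by linarith), div_mul_cancel₀ _ hs.ne']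
  rw [rpow_neg (by linarith), rpow_neg (by positivity)]
  exact inv_anti₀ (by positivity) hpow

lemma exp_neg_mul_le_one_add_rpow_neg {t x : ℝ} (ht : 0 ≤ t) (hx : 0 ≤ x) :
    exp (-(t * x)) ≤ (1 + x) ^ (-t) := by
  rw [rpow_def_of_pos (by linarith)]
  have := log_le_sub_one_of_pos (show 0 < 1 + x by linarith)
  exact exp_le_exp.2 (by nlinarith)

lemma sub_le_integral_sin_mul_sq (a b : ℝ) {t : ℝ} (ht : 0 < t) :
    (b - a) / 2 - t⁻¹ ≤ ∫ r in a..b, sin (r * t) ^ 2 := by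
  have hsc : ∀ x, |sin x * cos x| ≤ 1 := fun x => by
    rw [abs_le]; constructor <;> nlinarith [sin_sq_add_cos_sq x, sq_nonneg (sin x - cos x),
      sq_nonneg (sin x + cos x)]
  rw [intervalIntegral.integral_comp_mul_right (fun x => sin x ^ 2) ht.ne', integral_sin_sq,
    smul_eq_mul]
  have ha := abs_le.1 (hsc (a * t))
  have hb := abs_le.1 (hsc (b * t))
  have key : (b - a) / 2 - t⁻¹ ≤ t⁻¹ * ((- 1 - 1 + b * t - a * t) / 2) := by
    field_simp; linarith
  refine key.trans (mul_le_mul_of_nonneg_left ?_ (inv_nonneg.2 ht.le))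
  linarith

lemma integrableOn_pow_mul_one_add_rpow_neg {k : ℕ} {α t : ℝ} (hα : 0 < α)
    (ht : k + 1 < α * t) : IntegrableOn (fun r : ℝ => r ^ k * (1 + r ^ α) ^ (-t)) (Ioi 0) := by
  have hcont : ContinuousOn (fun r : ℝ => r ^ k * (1 + r ^ α) ^ (-t)) (Ici 0) := by
    refine (continuousOn_pow k).mul (ContinuousOn.rpow_const ?_ fun r hr => Or.inl ?_)
    · exact continuousOn_const.add (continuous_rpow_const hα.le).continuousOn
    · have : 0 ≤ r ^ α := rpow_nonneg hr α
      positivity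
  have hnear : IntegrableOn (fun r : ℝ => r ^ k * (1 + r ^ α) ^ (-t)) (Ioc 0 1) :=
    ((hcont.mono Icc_subset_Ici_self).integrableOn_Icc).mono_set Ioc_subset_Icc_self
  have hfar : IntegrableOn (fun r : ℝ => r ^ k * (1 + r ^ α) ^ (-t)) (Ioi 1) := by
    refine (integrableOn_Ioi_rpow_of_lt (by linarith : (k : ℝ) - α * t < -1) one_pos).mono'
      ((hcont.mono (Ioi_subset_Ici zero_le_one)).aestronglyMeasurable measurableSet_Ioi) ?_
    filter_upwards [ae_restrict_mem measurableSet_Ioi] with r (hr : 1 < r)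
    have hr0 : 0 < r := by linarith
    have ht0 : 0 < t := pos_of_mul_pos_right (by linarith [k.cast_nonneg (α := ℝ)]) hα.le
    rw [norm_of_nonneg (by positivity), rpow_sub hr0, rpow_natCast, div_eq_mul_inv,
      ← rpow_neg hr0.le, show -(α * t) = α * -t by ring, rpow_mul hr0.le]
    refine mul_le_mul_of_nonneg_left ?_ (by positivity)
    exact rpow_le_rpow_of_nonpos (by positivity) (le_add_of_nonneg_left zero_le_one)
      (by linarith)
  simpa [Ioc_union_Ioi_eq_Ioi zero_le_one] using hnear.union hfar

lemma integral_pow_mul_one_add_rpow_neg_le {k : ℕ} {α s t : ℝ} (hα : 0 < α) (hs : 0 < s)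
    (hst : s ≤ t) (hint : IntegrableOn (fun r : ℝ => r ^ k * (1 + r ^ α) ^ (-s)) (Ioi 0)) :
    ∫ r in Ioi 0, r ^ k * (1 + r ^ α) ^ (-t) ≤
      (s / t) ^ ((k + 1) / α) * ∫ r in Ioi 0, r ^ k * (1 + r ^ α) ^ (-s) := by
  set g : ℝ → ℝ := fun r => r ^ k * (1 + r ^ α) ^ (-s)
  obtain ⟨c, hc, hcα, hck⟩ : ∃ c : ℝ, 0 < c ∧ c ^ α = t / s ∧
      (c ^ (k + 1))⁻¹ = (s / t) ^ ((k + 1) / α) := by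
    have hts : 0 < t / s := div_pos (hs.trans_le hst) hs
    refine ⟨(t / s) ^ α⁻¹, by positivity, ?_, ?_⟩
    · rw [← rpow_mul hts.le, inv_mul_cancel₀ hα.ne', rpow_one]
    · rw [← inv_div t s, inv_rpow hts.le, ← rpow_natCast, ← rpow_mul hts.le]
      push_cast
      ring_nf
  have hdom : ∀ r ∈ Ioi (0 : ℝ), r ^ k * (1 + r ^ α) ^ (-t) ≤ (c ^ k)⁻¹ * g (c * r) := by
    intro r (hr : 0 < r)
    simp only [g]
    rw [mul_pow, mul_rpow hc.le hr.le, hcα, mul_assoc, inv_mul_cancel_left₀ (pow_ne_zero _ hc.ne')]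
    exact mul_le_mul_of_nonneg_left
      (one_add_rpow_neg_le_one_add_mul_rpow_neg hs hst (by positivity)) (by positivity)
  have hscaled_int : IntegrableOn (fun r => (c ^ k)⁻¹ * g (c * r)) (Ioi 0) :=
    ((integrableOn_Ioi_comp_mul_left_iff g 0 hc).2 (by simpa using hint)).const_mul _
  calc ∫ r in Ioi 0, r ^ k * (1 + r ^ α) ^ (-t)
      ≤ ∫ r in Ioi 0, (c ^ k)⁻¹ * g (c * r) := by
        refine integral_mono_of_nonneg ?_ hscaled_int ?_
        all_goals filter_upwards [ae_restrict_mem measurableSet_Ioi] with r (hr : 0 < r)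
        · positivity
        · exact hdom r hr
    _ = (s / t) ^ ((k + 1) / α) * ∫ r in Ioi 0, g r := by
        rw [integral_const_mul, integral_comp_mul_left_Ioi g 0 hc, mul_zero, smul_eq_mul,
          ← mul_assoc, ← mul_inv, ← pow_succ, hck]

lemma exp_neg_rpow_mul_rpow_le_integral_sin_sq {k : ℕ} {α t : ℝ} (hα : 1 ≤ α) (ht : 1 ≤ t)
    (hint : IntegrableOn (fun r : ℝ => r ^ k * ((1 + r ^ α) ^ (-t) * sin (r * t) ^ 2)) (Ioi 0)) :
    exp (-5 ^ α) * t ^ (-((k + 1) / α)) ≤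
      ∫ r in Ioi 0, r ^ k * ((1 + r ^ α) ^ (-t) * sin (r * t) ^ 2) := by
  have ht0 : 0 < t := by linarith
  set ε := t ^ (-α⁻¹)
  have hε : 0 < ε := by positivity
  have hεα : ε ^ α = t⁻¹ := by
    rw [← rpow_mul ht0.le, neg_mul, inv_mul_cancel₀ (by linarith), rpow_neg_one]
  have hεt : t⁻¹ ≤ ε := by
    rw [← rpow_neg_one]
    exact rpow_le_rpow_of_exponent_le ht (neg_le_neg (inv_le_one_of_one_le₀ hα))
  have hpow : t ^ (-((k + 1) / α)) = ε ^ k * ε := by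
    rw [← pow_succ, ← rpow_natCast, ← rpow_mul ht0.le]
    push_cast
    ring_nf
  have hpt : ∀ r ∈ Ioc ε (5 * ε), exp (-5 ^ α) * ε ^ k * sin (r * t) ^ 2 ≤
      r ^ k * ((1 + r ^ α) ^ (-t) * sin (r * t) ^ 2) := by
    rintro r ⟨hεr, hr5⟩
    have hr : 0 < r := hε.trans hεr
    have hexp : exp (-5 ^ α) ≤ (1 + r ^ α) ^ (-t) := by
      refine le_trans (exp_le_exp.2 ?_) (exp_neg_mul_le_one_add_rpow_neg ht0.le (by positivity))
      have hrα : t * r ^ α ≤ t * (5 ^ α * t⁻¹) := by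
        rw [← hεα, ← mul_rpow (by norm_num) hε.le]
        exact mul_le_mul_of_nonneg_left (rpow_le_rpow hr.le hr5 (by linarith)) ht0.le
      rw [mul_left_comm, mul_inv_cancel₀ ht0.ne', mul_one] at hrα
      linarith
    have hk : ε ^ k ≤ r ^ k := pow_le_pow_left₀ hε.le hεr.le k
    calc exp (-5 ^ α) * ε ^ k * sin (r * t) ^ 2
        ≤ (1 + r ^ α) ^ (-t) * r ^ k * sin (r * t) ^ 2 := by gcongr
      _ = r ^ k * ((1 + r ^ α) ^ (-t) * sin (r * t) ^ 2) := by ring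
  have hsin : ε ≤ ∫ r in Ioc ε (5 * ε), sin (r * t) ^ 2 := by
    rw [← intervalIntegral.integral_of_le (by linarith)]
    linarith [sub_le_integral_sin_mul_sq ε (5 * ε) ht0]
  have hsub : Ioc ε (5 * ε) ⊆ Ioi 0 := fun r hr => hε.trans hr.1
  calc exp (-5 ^ α) * t ^ (-((k + 1) / α)) = exp (-5 ^ α) * ε ^ k * ε := by rw [hpow]; ring
    _ ≤ exp (-5 ^ α) * ε ^ k * ∫ r in Ioc ε (5 * ε), sin (r * t) ^ 2 := by gcongr
    _ = ∫ r in Ioc ε (5 * ε), exp (-5 ^ α) * ε ^ k * sin (r * t) ^ 2 :=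
        (integral_const_mul _ _).symm
    _ ≤ ∫ r in Ioc ε (5 * ε), r ^ k * ((1 + r ^ α) ^ (-t) * sin (r * t) ^ 2) :=
        setIntegral_mono_on (by fun_prop : Continuous _).integrableOn_Ioc
          (hint.mono_set hsub) measurableSet_Ioc hpt
    _ ≤ ∫ r in Ioi 0, r ^ k * ((1 + r ^ α) ^ (-t) * sin (r * t) ^ 2) := by
        refine setIntegral_mono_set hint ?_ hsub.eventuallyLE
        filter_upwards [ae_restrict_mem measurableSet_Ioi] with r (hr : 0 < r)
        positivity

lemma pow_mul_one_add_rpow_neg_mul_sin_sq_le (k : ℕ) (α t : ℝ) {r : ℝ} (hr : 0 ≤ r) :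
    r ^ k * ((1 + r ^ α) ^ (-t) * sin (r * t) ^ 2) ≤ r ^ k * (1 + r ^ α) ^ (-t) :=
  mul_le_mul_of_nonneg_left (mul_le_of_le_one_right (by positivity) (sin_sq_le_one _))
    (by positivity)

lemma min_mul_le_and_le_inv_min_mul {c₁ c₂ x y : ℝ} (hc₁ : 0 < c₁) (hc₂ : 0 < c₂)
    (hx : 0 ≤ x) (h₁ : c₁ * x ≤ y) (h₂ : y ≤ c₂ * x) :
    min c₁ c₂⁻¹ * x ≤ y ∧ y ≤ (min c₁ c₂⁻¹)⁻¹ * x := by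
  have hmin : 0 < min c₁ c₂⁻¹ := by positivity
  refine ⟨(mul_le_mul_of_nonneg_right (min_le_left _ _) hx).trans h₁,
    h₂.trans (mul_le_mul_of_nonneg_right ?_ hx)⟩
  exact (le_inv_comm₀ hmin hc₂).1 (min_le_right _ _)

lemma exists_integral_pow_mul_one_add_rpow_neg_mul_sin_sq_asymp (k : ℕ) {α : ℝ} (hα : 1 ≤ α) :
    ∃ C > (0 : ℝ), ∃ t₀ > (0 : ℝ), ∀ t ≥ t₀,
      C * t ^ (-((k + 1) / α)) ≤
          ∫ r in Ioi 0, r ^ k * ((1 + r ^ α) ^ (-t) * sin (r * t) ^ 2) ∧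
        ∫ r in Ioi 0, r ^ k * ((1 + r ^ α) ^ (-t) * sin (r * t) ^ 2) ≤
          C⁻¹ * t ^ (-((k + 1) / α)) := by
  set β := (k + 1) / α
  set t₀ : ℝ := k + 2 with ht₀
  have ht₀0 : 0 < t₀ := by positivity
  have hint : ∀ t ≥ t₀, IntegrableOn (fun r : ℝ => r ^ k * (1 + r ^ α) ^ (-t)) (Ioi 0) :=
    fun t ht => integrableOn_pow_mul_one_add_rpow_neg (by linarith) (by nlinarith)
  set c₂ := t₀ ^ β * ∫ r in Ioi 0, r ^ k * (1 + r ^ α) ^ (-t₀)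
  have hbounds : ∀ t ≥ t₀,
      exp (-5 ^ α) * t ^ (-β) ≤ ∫ r in Ioi 0, r ^ k * ((1 + r ^ α) ^ (-t) * sin (r * t) ^ 2) ∧
      ∫ r in Ioi 0, r ^ k * ((1 + r ^ α) ^ (-t) * sin (r * t) ^ 2) ≤ c₂ * t ^ (-β) := by
    intro t ht
    have ht0 : 0 < t := ht₀0.trans_le ht
    constructor
    · refine exp_neg_rpow_mul_rpow_le_integral_sin_sq hα (by linarith)
        ((hint t ht).mono' (by fun_prop) ?_)
      filter_upwards [ae_restrict_mem measurableSet_Ioi] with r (hr : 0 < r)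
      rw [norm_of_nonneg (by positivity)]
      exact pow_mul_one_add_rpow_neg_mul_sin_sq_le k α t hr.le
    · calc ∫ r in Ioi 0, r ^ k * ((1 + r ^ α) ^ (-t) * sin (r * t) ^ 2)
          ≤ ∫ r in Ioi 0, r ^ k * (1 + r ^ α) ^ (-t) := by
            refine integral_mono_of_nonneg ?_ (hint t ht) ?_
            all_goals filter_upwards [ae_restrict_mem measurableSet_Ioi] with r (hr : 0 < r)
            · positivity
            · exact pow_mul_one_add_rpow_neg_mul_sin_sq_le k α t hr.le
        _ ≤ (t₀ / t) ^ β * ∫ r in Ioi 0, r ^ k * (1 + r ^ α) ^ (-t₀) :=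
            integral_pow_mul_one_add_rpow_neg_le (by linarith) ht₀0 ht (hint t₀ le_rfl)
        _ = c₂ * t ^ (-β) := by
            rw [div_rpow ht₀0.le ht0.le, rpow_neg ht0.le]
            ring
  have hc₂ : 0 < c₂ := by
    obtain ⟨hlo, hhi⟩ := hbounds t₀ le_rfl
    exact (exp_pos _).trans_le (le_of_mul_le_mul_right (hlo.trans hhi) (by positivity))
  refine ⟨min (exp (-5 ^ α)) c₂⁻¹, by positivity, t₀, ht₀0, fun t ht => ?_⟩
  obtain ⟨hlo, hhi⟩ := hbounds t ht
  exact min_mul_le_and_le_inv_min_mul (exp_pos _) hc₂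
    (rpow_nonneg (ht₀0.trans_le ht).le _) hlo hhi

lemma integral_exp_neg_mul_log_mul_sin_sq_div_sq_norm {E : Type*} [NormedAddCommGroup E]
    [NormedSpace ℝ E] [FiniteDimensional ℝ E] [MeasurableSpace E] [BorelSpace E] (μ : Measure E)
    [μ.IsAddHaarMeasure] (hE : 3 ≤ Module.finrank ℝ E) (α t : ℝ) :
    ∫ x, exp (-t * log (1 + ‖x‖ ^ α)) * sin (‖x‖ * t) ^ 2 / ‖x‖ ^ 2 ∂μ =
      Module.finrank ℝ E * μ.real (Metric.ball 0 1) *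
        ∫ r in Ioi 0, r ^ (Module.finrank ℝ E - 3) * ((1 + r ^ α) ^ (-t) * sin (r * t) ^ 2) := by
  have : Nontrivial E := Module.nontrivial_of_finrank_pos (R := ℝ) (by omega)
  rw [integral_fun_norm_addHaar μ (fun r => exp (-t * log (1 + r ^ α)) * sin (r * t) ^ 2 / r ^ 2),
    nsmul_eq_mul, smul_eq_mul, mul_assoc]
  congr 2
  refine setIntegral_congr_fun measurableSet_Ioi fun r (hr : 0 < r) => ?_
  have hexp : exp (-t * log (1 + r ^ α)) = (1 + r ^ α) ^ (-t) := by
    rw [rpow_def_of_pos (by positivity : (0 : ℝ) < 1 + r ^ α), mul_comm]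
  rw [smul_eq_mul, hexp, show Module.finrank ℝ E - 1 = Module.finrank ℝ E - 3 + 2 by omega,
    pow_add]
  field_simp

/-- Proposition 4.1: for `n > 2` and `θ ≥ 1/2`, the squared `L²` norm of the profile
satisfies `∫ (1+|ξ|^{2θ})^{-t} sin²(t|ξ|)/|ξ|² dξ ≈ t^{-(n-2)/(2θ)}` for large `t`. -/
theorem stmt_15 (n : ℕ) (hn : 2 < n) (θ : ℝ) (hθ : 1 / 2 ≤ θ) :
    ∃ C > (0 : ℝ), ∃ t₀ > (0 : ℝ), ∀ t ≥ t₀,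
      C * t ^ (-((n : ℝ) - 2) / (2 * θ)) ≤
          (∫ ξ : EuclideanSpace ℝ (Fin n),
            Real.exp (-t * Real.log (1 + ‖ξ‖ ^ (2 * θ))) * Real.sin (‖ξ‖ * t) ^ 2 / ‖ξ‖ ^ 2) ∧
        (∫ ξ : EuclideanSpace ℝ (Fin n),
            Real.exp (-t * Real.log (1 + ‖ξ‖ ^ (2 * θ))) * Real.sin (‖ξ‖ * t) ^ 2 / ‖ξ‖ ^ 2) ≤
          C⁻¹ * t ^ (-((n : ℝ) - 2) / (2 * θ)) := by
  have hdim : Module.finrank ℝ (EuclideanSpace ℝ (Fin n)) = n := by simp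
  obtain ⟨K, hK, hKeq⟩ : ∃ K > (0 : ℝ),
      K = n * volume.real (Metric.ball (0 : EuclideanSpace ℝ (Fin n)) 1) :=
    ⟨_, mul_pos (by exact_mod_cast (by omega : 0 < n)) (ENNReal.toReal_pos
      (Metric.measure_ball_pos volume 0 one_pos).ne' measure_ball_lt_top.ne), rfl⟩
  have hβ : -((n : ℝ) - 2) / (2 * θ) = -((((n - 3 : ℕ) : ℝ) + 1) / (2 * θ)) := by
    rw [Nat.cast_sub (by omega)]; push_cast; ring
  obtain ⟨C, hC, t₀, ht₀, hbounds⟩ :=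
    exists_integral_pow_mul_one_add_rpow_neg_mul_sin_sq_asymp (n - 3) (α := 2 * θ) (by linarith)
  refine ⟨min (K * C) (K * C⁻¹)⁻¹, by positivity, t₀, ht₀, fun t ht => ?_⟩
  obtain ⟨hlo, hhi⟩ := hbounds t ht
  rw [integral_exp_neg_mul_log_mul_sin_sq_div_sq_norm volume (by omega), hdim, ← hKeq, hβ]
  exact min_mul_le_and_le_inv_min_mul (by positivity) (by positivity)
    (rpow_nonneg (ht₀.trans_le ht).le _)
    (by rw [mul_assoc]; exact mul_le_mul_of_nonneg_left hlo hK.le)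
    (by rw [mul_assoc]; exact mul_le_mul_of_nonneg_left hhi hK.le)
end

section
/- Let n ≥ 1 and θ ≥ 1/2. Then there exist t₀ > 0 and a constant C > 0 depending only on n and θ such that for all t ≥ t₀: C^{−1} t^{−(n+4θ−2)/(2θ)} ≤ ∫_{ℝⁿ} a(ξ)² e^{−t log(1+|ξ|^{2θ})} · sin²(|ξ|t)/|ξ|² dξ ≤ C t^{−(n+4θ−2)/(2θ)}, where a(ξ) = (1/2) log(1+|ξ|^{2θ}). -/
/-!
Write `p = 2θ` and `q = n - 3 + 2p`. In polar coordinates the integral is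
`c_n ∫₀^∞ r^(n-1) profile(r) dr`.

Upper bound: `log (1 + r^p) ≤ r^p`, `sin² ≤ 1`, and Bernoulli's inequality gives
`(1 + r^p)^(-t) ≤ (1 + (t/k) r^p)^(-k)` for a fixed `k = n + 2`, so the radial integral is at most
`∫ r^q (1 + (t/k) r^p)^(-k) dr`, which is `(t/k)^(-(q+1)/p)` times a finite constant by scaling.

Lower bound: on the shell `τ < r ≤ 4τ` with `τ = t^(-1/p)` we have `r^p ≤ 4^p / t ≤ 1`, so
`log (1 + r^p) ≥ r^p / 2` and `(1 + r^p)^(-t) ≥ exp (-4^p)`; and since the shell has length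
`3τ ≥ 3/t`, `∫ sin² (r t) dr ≥ 3τ/2 - 1/t ≥ τ/2` over it. This gives `≳ τ^(q+1) = t^(-(q+1)/p)`.
-/

open MeasureTheory Real Set

namespace LogDampedWave

lemma half_le_log_one_add {x : ℝ} (hx₀ : 0 ≤ x) (hx₂ : x ≤ 2) : x / 2 ≤ log (1 + x) := by
  refine le_trans ?_ (le_log_one_add_of_nonneg hx₀)
  rw [div_le_div_iff₀ two_pos (by linarith)]
  nlinarith

lemma log_one_add_le_self {x : ℝ} (hx : 0 ≤ x) : log (1 + x) ≤ x := by
  linarith [log_le_sub_one_of_pos (by linarith : 0 < 1 + x)]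

lemma exp_neg_mul_log_one_add_le {x t k : ℝ} (hx : 0 ≤ x) (hk : 0 < k) (hkt : k ≤ t) :
    exp (-t * log (1 + x)) ≤ (1 + t / k * x) ^ (-k) := by
  have hx₁ : 0 < 1 + x := by linarith
  have ht : 0 < t := hk.trans_le hkt
  have hbernoulli : 1 + t / k * x ≤ (1 + x) ^ (t / k) :=
    one_add_mul_self_le_rpow_one_add (by linarith) ((one_le_div hk).2 hkt)
  calc exp (-t * log (1 + x)) = ((1 + x) ^ (t / k)) ^ (-k) := by
        rw [← rpow_mul hx₁.le, rpow_def_of_pos hx₁]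
        congr 1
        field_simp
    _ ≤ (1 + t / k * x) ^ (-k) := rpow_le_rpow_of_nonpos (by positivity) hbernoulli (by linarith)

lemma sub_div_two_sub_inv_le_integral_sin_sq {t : ℝ} (ht : 0 < t) (a b : ℝ) :
    (b - a) / 2 - 1 / t ≤ ∫ r in a..b, sin (r * t) ^ 2 := by
  rw [intervalIntegral.integral_comp_mul_right (fun u => sin u ^ 2) ht.ne', integral_sin_sq,
    smul_eq_mul]
  have hsc : ∀ u, |sin u * cos u| ≤ 1 := fun u => by
    rw [abs_mul]; exact mul_le_one₀ (abs_sin_le_one u) (abs_nonneg _) (abs_cos_le_one u)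
  have ha := abs_le.1 (hsc (a * t))
  have hb := abs_le.1 (hsc (b * t))
  rw [show ∀ X Y : ℝ, t⁻¹ * ((X - Y + b * t - a * t) / 2) = (b - a) / 2 + (X - Y) / 2 * t⁻¹ by
    intro X Y; field_simp; ring, one_div]
  nlinarith [inv_pos.2 ht]

lemma integrableOn_rpow_mul_one_add_rpow_neg {p q k : ℝ} (hp : 0 < p) (hq : 0 ≤ q)
    (hk : q + 1 < p * k) : IntegrableOn (fun s : ℝ => s ^ q * (1 + s ^ p) ^ (-k)) (Ioi 0) := by
  have hk₀ : 0 ≤ k := by nlinarith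
  have hcont : ContinuousOn (fun s : ℝ => s ^ q * (1 + s ^ p) ^ (-k)) (Ioi 0) :=
    fun s (hs : 0 < s) => ContinuousAt.continuousWithinAt
      (by fun_prop (disch := exact Or.inl (by positivity)))
  rw [← Ioc_union_Ioi_eq_Ioi zero_le_one]
  refine IntegrableOn.union ?_ ?_
  · refine Integrable.mono' (integrableOn_const (C := (1 : ℝ)) measure_Ioc_lt_top.ne)
      ((hcont.mono Ioc_subset_Ioi_self).aestronglyMeasurable measurableSet_Ioc) ?_
    filter_upwards [ae_restrict_mem measurableSet_Ioc] with s ⟨hs₀, hs₁⟩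
    rw [norm_of_nonneg (by positivity)]
    exact mul_le_one₀ (rpow_le_one hs₀.le hs₁ hq) (by positivity)
      (rpow_le_one_of_one_le_of_nonpos (by linarith [rpow_nonneg hs₀.le p]) (by linarith))
  · refine Integrable.mono' (integrableOn_Ioi_rpow_of_lt (by linarith : q - p * k < -1) one_pos)
      ((hcont.mono (Ioi_subset_Ioi zero_le_one)).aestronglyMeasurable measurableSet_Ioi) ?_
    filter_upwards [ae_restrict_mem measurableSet_Ioi] with s (hs : 1 < s)
    have hs₀ : 0 < s := one_pos.trans hs
    rw [norm_of_nonneg (by positivity), sub_eq_add_neg, rpow_add hs₀, ← mul_neg, rpow_mul hs₀.le]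
    exact mul_le_mul_of_nonneg_left
      (rpow_le_rpow_of_nonpos (by positivity) (by linarith) (by linarith)) (by positivity)

lemma rpow_mul_one_add_mul_rpow_eq {p q k μ r : ℝ} (hp : 0 < p) (hμ : 0 < μ) (hr : 0 ≤ r) :
    r ^ q * (1 + μ * r ^ p) ^ (-k) =
      μ ^ (-q / p) * ((μ ^ p⁻¹ * r) ^ q * (1 + (μ ^ p⁻¹ * r) ^ p) ^ (-k)) := by
  rw [mul_rpow (by positivity) hr, mul_rpow (by positivity) hr, ← rpow_mul hμ.le,
    ← rpow_mul hμ.le, inv_mul_cancel₀ hp.ne', rpow_one, ← mul_assoc, ← mul_assoc,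
    ← rpow_add hμ, neg_div, ← div_eq_inv_mul, neg_add_cancel, rpow_zero, one_mul]

lemma integrableOn_rpow_mul_one_add_mul_rpow_neg {p q k μ : ℝ} (hp : 0 < p) (hq : 0 ≤ q)
    (hk : q + 1 < p * k) (hμ : 0 < μ) :
    IntegrableOn (fun r : ℝ => r ^ q * (1 + μ * r ^ p) ^ (-k)) (Ioi 0) := by
  have h := (integrableOn_Ioi_comp_mul_left_iff _ 0 (rpow_pos_of_pos hμ p⁻¹)).2
    (by rw [mul_zero]; exact integrableOn_rpow_mul_one_add_rpow_neg hp hq hk)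
  refine IntegrableOn.congr_fun (h.const_mul (μ ^ (-q / p))) (fun r (hr : 0 < r) => ?_)
    measurableSet_Ioi
  exact (rpow_mul_one_add_mul_rpow_eq hp hμ hr.le).symm

lemma integral_rpow_mul_one_add_mul_rpow_neg {p q k μ : ℝ} (hp : 0 < p) (hμ : 0 < μ) :
    ∫ r in Ioi 0, r ^ q * (1 + μ * r ^ p) ^ (-k) =
      μ ^ (-(q + 1) / p) * ∫ s in Ioi 0, s ^ q * (1 + s ^ p) ^ (-k) := by
  rw [setIntegral_congr_fun measurableSet_Ioi fun r (hr : 0 < r) =>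
      rpow_mul_one_add_mul_rpow_eq (k := k) (q := q) hp hμ hr.le,
    integral_const_mul, integral_comp_mul_left_Ioi (fun s => s ^ q * (1 + s ^ p) ^ (-k)) 0
      (rpow_pos_of_pos hμ p⁻¹), mul_zero, smul_eq_mul, ← mul_assoc, ← rpow_neg hμ.le,
    ← rpow_add hμ]
  congr 2
  ring

/-- The integrand of the theorem as a function of `r = ‖ξ‖`, with `p = 2θ`. -/
noncomputable def profile (p t r : ℝ) : ℝ :=
  ((1 / 2) * log (1 + r ^ p)) ^ 2 * exp (-t * log (1 + r ^ p)) * sin (r * t) ^ 2 / r ^ 2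

lemma profile_nonneg (p t r : ℝ) : 0 ≤ profile p t r := by
  unfold profile; positivity

lemma continuousOn_profile (p t : ℝ) : ContinuousOn (profile p t) (Ioi 0) := by
  have hlog : ContinuousOn (fun r : ℝ => log (1 + r ^ p)) (Ioi 0) := by
    refine ContinuousOn.log (by fun_prop (disch := grind)) fun r (hr : 0 < r) => ?_
    positivity
  unfold profile
  exact ContinuousOn.div (by fun_prop) (by fun_prop) fun r (hr : 0 < r) => by positivity

lemma pow_pred_mul_rpow_sq_div_sq {n : ℕ} (hn : 1 ≤ n) {p r : ℝ} (hr : 0 < r) :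
    r ^ (n - 1) * (r ^ p) ^ 2 / r ^ 2 = r ^ ((n : ℝ) - 3 + 2 * p) := by
  rw [← rpow_natCast, ← rpow_natCast, ← rpow_natCast, ← rpow_mul hr.le, ← rpow_add hr,
    ← rpow_sub hr]
  congr 1
  push_cast [hn]
  ring

lemma pow_mul_profile_le {n : ℕ} (hn : 1 ≤ n) {p t k r : ℝ} (hk : 0 < k) (hkt : k ≤ t)
    (hr : 0 < r) :
    r ^ (n - 1) * profile p t r ≤
      1 / 4 * (r ^ ((n : ℝ) - 3 + 2 * p) * (1 + t / k * r ^ p) ^ (-k)) := by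
  have hx : 0 ≤ r ^ p := by positivity
  have ht : 0 ≤ t := hk.le.trans hkt
  have hlog₀ : 0 ≤ log (1 + r ^ p) := log_nonneg (by linarith)
  calc r ^ (n - 1) * profile p t r
      ≤ r ^ (n - 1) * ((1 / 2 * r ^ p) ^ 2 * (1 + t / k * r ^ p) ^ (-k) * 1 / r ^ 2) := by
        unfold profile
        gcongr
        · exact log_one_add_le_self hx
        · exact exp_neg_mul_log_one_add_le hx hk hkt
        · exact sin_sq_le_one _
    _ = _ := by
        rw [← pow_pred_mul_rpow_sq_div_sq hn hr]
        ring

lemma le_pow_mul_profile {n : ℕ} (hn : 1 ≤ n) {p t r : ℝ} (ht : 0 ≤ t) (hr : 0 < r)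
    (hrp : r ^ p ≤ 2) :
    1 / 16 * (r ^ ((n : ℝ) - 3 + 2 * p) * exp (-t * r ^ p)) * sin (r * t) ^ 2 ≤
      r ^ (n - 1) * profile p t r := by
  have hx : 0 ≤ r ^ p := by positivity
  calc 1 / 16 * (r ^ ((n : ℝ) - 3 + 2 * p) * exp (-t * r ^ p)) * sin (r * t) ^ 2
      = r ^ (n - 1) * ((1 / 2 * (r ^ p / 2)) ^ 2 * exp (-t * r ^ p) * sin (r * t) ^ 2 / r ^ 2) := by
        rw [← pow_pred_mul_rpow_sq_div_sq hn hr]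
        ring
    _ ≤ r ^ (n - 1) * profile p t r := by
        unfold profile
        gcongr _ * ((1 / 2 * ?_) ^ 2 * exp ?_ * _ / _)
        · exact half_le_log_one_add hx hrp
        · exact mul_le_mul_of_nonpos_left (log_one_add_le_self hx) (by linarith)

lemma integrableOn_pow_mul_profile {n : ℕ} (hn : 1 ≤ n) {p t : ℝ} (hp : 1 ≤ p)
    (ht : (n : ℝ) + 2 ≤ t) : IntegrableOn (fun r => r ^ (n - 1) * profile p t r) (Ioi 0) := by
  have hn' : (1 : ℝ) ≤ n := by exact_mod_cast hn
  have hk : (0 : ℝ) < n + 2 := by positivity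
  refine Integrable.mono' ((integrableOn_rpow_mul_one_add_mul_rpow_neg (by positivity)
      (by linarith : 0 ≤ (n : ℝ) - 3 + 2 * p) (by nlinarith : (n : ℝ) - 3 + 2 * p + 1 < p * (n + 2))
      (div_pos (hk.trans_le ht) hk)).const_mul (1 / 4))
    ((((continuous_pow _).continuousOn).mul (continuousOn_profile p t)).aestronglyMeasurable
      measurableSet_Ioi) ?_
  filter_upwards [ae_restrict_mem measurableSet_Ioi] with r (hr : 0 < r)
  rw [norm_of_nonneg (by have := profile_nonneg p t r; positivity)]
  exact pow_mul_profile_le hn hk ht hr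

lemma integral_pow_mul_profile_le {n : ℕ} (hn : 1 ≤ n) {p : ℝ} (hp : 1 ≤ p) :
    ∃ M, ∀ t, (n : ℝ) + 2 ≤ t →
      ∫ r in Ioi 0, r ^ (n - 1) * profile p t r ≤ M * t ^ (-((n : ℝ) + 2 * p - 2) / p) := by
  have hn' : (1 : ℝ) ≤ n := by exact_mod_cast hn
  set k : ℝ := n + 2
  set q : ℝ := n - 3 + 2 * p
  have hk : 0 < k := by positivity
  have hγ : -(q + 1) / p = -((n : ℝ) + 2 * p - 2) / p := by ring
  refine ⟨1 / 4 * (∫ s in Ioi 0, s ^ q * (1 + s ^ p) ^ (-k)) / k ^ (-((n : ℝ) + 2 * p - 2) / p),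
    fun t ht => ?_⟩
  have hμ : 0 < t / k := div_pos (hk.trans_le ht) hk
  calc ∫ r in Ioi 0, r ^ (n - 1) * profile p t r
      ≤ ∫ r in Ioi 0, 1 / 4 * (r ^ q * (1 + t / k * r ^ p) ^ (-k)) := by
        refine integral_mono_of_nonneg ?_ ((integrableOn_rpow_mul_one_add_mul_rpow_neg
          (by positivity) (by linarith) (by nlinarith) hμ).const_mul _) ?_
        · filter_upwards [ae_restrict_mem measurableSet_Ioi] with r (hr : 0 < r)
          have := profile_nonneg p t r
          positivity
        · filter_upwards [ae_restrict_mem measurableSet_Ioi] with r (hr : 0 < r)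
          exact pow_mul_profile_le hn hk ht hr
    _ = _ := by
        rw [integral_const_mul, integral_rpow_mul_one_add_mul_rpow_neg (by positivity) hμ, hγ,
          div_rpow (hk.trans_le ht).le hk.le]
        ring

lemma integral_pow_mul_profile_ge {n : ℕ} (hn : 1 ≤ n) {p t : ℝ} (hp : 1 ≤ p)
    (ht : (4 : ℝ) ^ p ≤ t)
    (hint : IntegrableOn (fun r => r ^ (n - 1) * profile p t r) (Ioi 0)) :
    exp (-4 ^ p) / 32 * t ^ (-((n : ℝ) + 2 * p - 2) / p) ≤
      ∫ r in Ioi 0, r ^ (n - 1) * profile p t r := by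
  have hn' : (1 : ℝ) ≤ n := by exact_mod_cast hn
  have h4 : (4 : ℝ) ≤ 4 ^ p := by
    simpa using rpow_le_rpow_of_exponent_le (by norm_num : (1 : ℝ) ≤ 4) hp
  have ht₁ : 1 ≤ t := by linarith
  have ht₀ : 0 < t := by linarith
  have hp₀ : 0 ≤ p := by linarith
  set q : ℝ := n - 3 + 2 * p with hq_def
  have hq : 0 ≤ q := by rw [hq_def]; linarith
  set τ : ℝ := t ^ (-p⁻¹)
  have hτ : 0 < τ := rpow_pos_of_pos ht₀ _
  have hτp : τ ^ p = t⁻¹ := by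
    rw [← rpow_mul ht₀.le, neg_mul, inv_mul_cancel₀ (by positivity), rpow_neg_one]
  have h4τp : (4 * τ) ^ p = 4 ^ p / t := by
    rw [mul_rpow (by norm_num) hτ.le, hτp, div_eq_mul_inv]
  have hτt : 1 / t ≤ τ := by
    rw [one_div, ← rpow_neg_one]
    exact rpow_le_rpow_of_exponent_le ht₁ (by simpa using inv_le_one_of_one_le₀ hp)
  have hτγ : τ ^ q * τ = t ^ (-((n : ℝ) + 2 * p - 2) / p) := by
    rw [← rpow_add_one hτ.ne', ← rpow_mul ht₀.le]
    congr 1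
    field_simp
    ring
  set c : ℝ := 1 / 16 * (τ ^ q * exp (-4 ^ p)) with hc_def
  have hpointwise : ∀ r ∈ Ioc τ (4 * τ), c * sin (r * t) ^ 2 ≤ r ^ (n - 1) * profile p t r := by
    rintro r ⟨hτr, hr4τ⟩
    have hr : 0 < r := hτ.trans hτr
    have hrp : r ^ p ≤ (4 * τ) ^ p := rpow_le_rpow hr.le hr4τ hp₀
    have h4τp₁ : (4 * τ) ^ p ≤ 1 := by rw [h4τp, div_le_one ht₀]; exact ht
    refine le_trans ?_ (le_pow_mul_profile hn ht₀.le hr (by linarith))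
    rw [hc_def]
    gcongr
    rw [neg_mul, neg_le_neg_iff]
    calc t * r ^ p ≤ t * (4 * τ) ^ p := by gcongr
      _ = 4 ^ p := by rw [h4τp]; field_simp
  calc exp (-4 ^ p) / 32 * t ^ (-((n : ℝ) + 2 * p - 2) / p)
      = c * ((4 * τ - τ) / 2 - τ) := by rw [← hτγ, hc_def]; ring
    _ ≤ c * ∫ r in τ..4 * τ, sin (r * t) ^ 2 := by
        gcongr
        exact (sub_le_sub_left hτt _).trans (sub_div_two_sub_inv_le_integral_sin_sq ht₀ τ (4 * τ))
    _ = ∫ r in Ioc τ (4 * τ), c * sin (r * t) ^ 2 := by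
        rw [intervalIntegral.integral_of_le (by linarith), integral_const_mul]
    _ ≤ ∫ r in Ioc τ (4 * τ), r ^ (n - 1) * profile p t r :=
        setIntegral_mono_on (Continuous.integrableOn_Ioc (by fun_prop))
          (hint.mono_set fun r hr => hτ.trans hr.1) measurableSet_Ioc hpointwise
    _ ≤ ∫ r in Ioi 0, r ^ (n - 1) * profile p t r := by
        refine setIntegral_mono_set hint ?_ (LE.le.eventuallyLE fun r hr => hτ.trans hr.1)
        filter_upwards [ae_restrict_mem measurableSet_Ioi] with r (hr : 0 < r)
        have := profile_nonneg p t r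
        positivity

lemma exists_integral_profile_norm_eq_mul {n : ℕ} (hn : 1 ≤ n) :
    ∃ c > 0, ∀ p t : ℝ, ∫ ξ : EuclideanSpace ℝ (Fin n), profile p t ‖ξ‖ =
      c * ∫ r in Ioi 0, r ^ (n - 1) * profile p t r := by
  have : Nonempty (Fin n) := Fin.pos_iff_nonempty.mp hn
  have hn' : (0 : ℝ) < n := by exact_mod_cast hn
  refine ⟨n * volume.real (Metric.ball (0 : EuclideanSpace ℝ (Fin n)) 1),
    mul_pos hn' (ENNReal.toReal_pos (Metric.measure_ball_pos volume _ one_pos).ne'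
      measure_ball_lt_top.ne), fun p t => ?_⟩
  simp only [integral_fun_norm_addHaar volume (profile p t), finrank_euclideanSpace_fin,
    nsmul_eq_mul, smul_eq_mul, mul_assoc]

end LogDampedWave

open LogDampedWave

/-- Lemma 4.1: for `n ≥ 1` and `θ ≥ 1/2`, with `a(ξ) = (1/2) log(1+|ξ|^{2θ})`,
`∫ a(ξ)² (1+|ξ|^{2θ})^{-t} sin²(|ξ|t)/|ξ|² dξ ≈ t^{-(n+4θ-2)/(2θ)}` for large `t`. -/
theorem stmt_18 (n : ℕ) (hn : 1 ≤ n) (θ : ℝ) (hθ : 1 / 2 ≤ θ) :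
    ∃ C > (0 : ℝ), ∃ t₀ > (0 : ℝ), ∀ t ≥ t₀,
      C⁻¹ * t ^ (-((n : ℝ) + 4 * θ - 2) / (2 * θ)) ≤
          (∫ ξ : EuclideanSpace ℝ (Fin n),
            ((1 / 2) * Real.log (1 + ‖ξ‖ ^ (2 * θ))) ^ 2 *
              Real.exp (-t * Real.log (1 + ‖ξ‖ ^ (2 * θ))) *
              Real.sin (‖ξ‖ * t) ^ 2 / ‖ξ‖ ^ 2) ∧
        (∫ ξ : EuclideanSpace ℝ (Fin n),
            ((1 / 2) * Real.log (1 + ‖ξ‖ ^ (2 * θ))) ^ 2 *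
              Real.exp (-t * Real.log (1 + ‖ξ‖ ^ (2 * θ))) *
              Real.sin (‖ξ‖ * t) ^ 2 / ‖ξ‖ ^ 2) ≤
          C * t ^ (-((n : ℝ) + 4 * θ - 2) / (2 * θ)) := by
  have hp : 1 ≤ 2 * θ := by linarith
  obtain ⟨c, hc, hradial⟩ := exists_integral_profile_norm_eq_mul hn
  obtain ⟨M, hM⟩ := integral_pow_mul_profile_le hn hp
  set K : ℝ := exp (-4 ^ (2 * θ)) / 32
  have hcK : 0 < c * K := mul_pos hc (by positivity)
  set C := max (c * K)⁻¹ (c * M)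
  refine ⟨C, lt_max_of_lt_left (inv_pos.2 hcK), max ((n : ℝ) + 2) (4 ^ (2 * θ)),
    lt_max_of_lt_left (by positivity), fun t ht => ?_⟩
  have ht₁ : (n : ℝ) + 2 ≤ t := le_of_max_le_left ht
  have ht₂ : (4 : ℝ) ^ (2 * θ) ≤ t := le_of_max_le_right ht
  change _ ≤ ∫ ξ : EuclideanSpace ℝ (Fin n), profile (2 * θ) t ‖ξ‖ ∧
    ∫ ξ : EuclideanSpace ℝ (Fin n), profile (2 * θ) t ‖ξ‖ ≤ _
  rw [show -((n : ℝ) + 4 * θ - 2) / (2 * θ) = -((n : ℝ) + 2 * (2 * θ) - 2) / (2 * θ) by ring,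
    hradial]
  set T := t ^ (-((n : ℝ) + 2 * (2 * θ) - 2) / (2 * θ))
  have hT : 0 ≤ T := rpow_nonneg ((by positivity : (0 : ℝ) ≤ n + 2).trans ht₁) _
  constructor
  · calc C⁻¹ * T ≤ c * K * T := by gcongr; exact inv_le_of_inv_le₀ hcK (le_max_left _ _)
      _ = c * (K * T) := mul_assoc _ _ _
      _ ≤ c * ∫ r in Ioi 0, r ^ (n - 1) * profile (2 * θ) t r := by
          gcongr
          exact integral_pow_mul_profile_ge hn hp ht₂ (integrableOn_pow_mul_profile hn hp ht₁)
  · calc c * ∫ r in Ioi 0, r ^ (n - 1) * profile (2 * θ) t r ≤ c * (M * T) := by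
          gcongr; exact hM t ht₁
      _ = c * M * T := (mul_assoc _ _ _).symm
      _ ≤ C * T := by gcongr; exact le_max_right _ _
end

section
/- Let n ≥ 1 and θ ≥ 1/2. Then there exist t₀ > 0 and a constant C > 0 depending only on n and θ such that for all t ≥ t₀: C t^{−n/(2θ)} ≤ ∫_{ℝⁿ} e^{−t log(1+|ξ|^{2θ})} · cos²(|ξ|t) dξ ≤ C^{−1} t^{−n/(2θ)}. -/
/-!
Write `p = 2θ ≥ 1`, so that the weight is `(1 + ‖ξ‖ ^ p) ^ (-t)`.

Upper bound: drop `cos²`. The substitution `ξ = t ^ (-1/p) • η` turns the integral of the weight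
into `t ^ (-n/p) * ∫ (1 + ‖η‖ ^ p / t) ^ (-t) dη`, and `t ↦ t * log (1 + a / t)` is monotone by
concavity of `log`, so for `t ≥ n + 1` the integrand is dominated by its (integrable) value at
`t = n + 1`.

Lower bound: in polar coordinates keep only the shell `L < ‖ξ‖ ≤ 3L` with `L = t ^ (-1/p)`.
There the weight is at least `exp (-3 ^ p)`, and because `p ≥ 1` we have `L * t ≥ 1`, so the
shell is wide enough for `cos² (‖ξ‖ * t)` to have mean at least `1/4` on it.
-/

open MeasureTheory Set Module Real

lemma one_add_le_two_mul_one_add_rpow {u p : ℝ} (hu : 0 ≤ u) (hp : 1 ≤ p) :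
    1 + u ≤ 2 * (1 + u ^ p) := by
  rcases le_total u 1 with h | h
  · nlinarith [rpow_nonneg hu p]
  · nlinarith [self_le_rpow_of_one_le h hp]

lemma exp_neg_mul_log_one_add_rpow_le {u p t : ℝ} (hu : 0 ≤ u) (hp : 1 ≤ p) (ht : 0 ≤ t) :
    exp (-t * log (1 + u ^ p)) ≤ 2 ^ t * (1 + u) ^ (-t) := by
  calc exp (-t * log (1 + u ^ p)) = (1 + u ^ p) ^ (-t) := by
        rw [rpow_def_of_pos (by positivity) (-t), mul_comm]
    _ ≤ ((1 + u) / 2) ^ (-t) := by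
        apply rpow_le_rpow_of_nonpos (by positivity) _ (by linarith)
        linarith [one_add_le_two_mul_one_add_rpow hu hp]
    _ = 2 ^ t * (1 + u) ^ (-t) := by
        rw [div_rpow (by positivity) zero_le_two, rpow_neg zero_le_two, div_inv_eq_mul, mul_comm]

lemma mul_log_one_add_div_le_mul_log_one_add_div {a s t : ℝ} (ha : 0 ≤ a) (hs : 0 < s)
    (hst : s ≤ t) : s * log (1 + a / s) ≤ t * log (1 + a / t) := by
  have ht : 0 < t := hs.trans_le hst
  have hconc := strictConcaveOn_log_Ioi.concaveOn.2 (mem_Ioi.2 one_pos)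
    (mem_Ioi.2 (by positivity : (0 : ℝ) < 1 + a / s))
    (sub_nonneg.2 ((div_le_one ht).2 hst)) (by positivity : 0 ≤ s / t) (by ring)
  have hmid : (1 - s / t) • (1 : ℝ) + (s / t) • (1 + a / s) = 1 + a / t := by
    simp only [smul_eq_mul]; field_simp; ring
  rw [hmid, smul_eq_mul, smul_eq_mul, log_one, mul_zero, zero_add] at hconc
  calc s * log (1 + a / s) = t * (s / t * log (1 + a / s)) := by field_simp
    _ ≤ t * log (1 + a / t) := mul_le_mul_of_nonneg_left hconc ht.le

lemma sub_le_integral_cos_mul_sq {t : ℝ} (ht : 0 < t) (a b : ℝ) :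
    (b - a) / 2 - 1 / (2 * t) ≤ ∫ y in a..b, cos (y * t) ^ 2 := by
  rw [intervalIntegral.integral_comp_mul_right (fun x => cos x ^ 2) ht.ne', integral_cos_sq,
    smul_eq_mul]
  have hb := neg_one_le_sin (2 * (b * t))
  have ha := sin_le_one (2 * (a * t))
  rw [sin_two_mul] at hb ha
  rw [div_sub_div _ _ two_ne_zero (by positivity), div_le_iff₀ (by positivity)]
  field_simp
  nlinarith

lemma rpow_neg_one_div_rpow {p t : ℝ} (hp : p ≠ 0) (ht : 0 ≤ t) : (t ^ (-1 / p)) ^ p = t⁻¹ := by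
  rw [← rpow_mul ht, div_mul_cancel₀ _ hp, rpow_neg_one]

lemma exp_neg_rpow_le_exp_neg_mul_log_one_add_rpow {c p t y : ℝ} (hp : 0 < p) (ht : 0 < t)
    (hy : 0 ≤ y) (hyc : y ≤ c * t ^ (-1 / p)) : exp (-c ^ p) ≤ exp (-t * log (1 + y ^ p)) := by
  have hc : 0 ≤ c := nonneg_of_mul_nonneg_left (hy.trans hyc) (rpow_pos_of_pos ht _)
  have hlog : log (1 + y ^ p) ≤ y ^ p := by
    linarith [log_le_sub_one_of_pos (by positivity : 0 < 1 + y ^ p)]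
  have hyp : y ^ p ≤ c ^ p * t⁻¹ := by
    calc y ^ p ≤ (c * t ^ (-1 / p)) ^ p := rpow_le_rpow hy hyc hp.le
      _ = c ^ p * t⁻¹ := by
        rw [mul_rpow hc (rpow_nonneg ht.le _), rpow_neg_one_div_rpow hp.ne' ht.le]
  have : t * log (1 + y ^ p) ≤ c ^ p := by
    calc t * log (1 + y ^ p) ≤ t * (c ^ p * t⁻¹) := by gcongr; exact hlog.trans hyp
      _ = c ^ p := by field_simp
  exact exp_le_exp.2 (by linarith)

lemma le_setIntegral_Ioi_pow_mul_exp_neg_mul_log_mul_cos_sq (k : ℕ) {p t : ℝ} (hp : 1 ≤ p)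
    (ht : 1 ≤ t)
    (hint : IntegrableOn (fun y => y ^ k * (exp (-t * log (1 + y ^ p)) * cos (y * t) ^ 2))
      (Ioi 0)) :
    exp (-3 ^ p) / 2 * t ^ (-(k + 1 : ℝ) / p) ≤
      ∫ y in Ioi 0, y ^ k * (exp (-t * log (1 + y ^ p)) * cos (y * t) ^ 2) := by
  have hp0 : 0 < p := one_pos.trans_le hp
  have ht0 : 0 < t := one_pos.trans_le ht
  set L := t ^ (-1 / p) with hL
  have hL0 : 0 < L := rpow_pos_of_pos ht0 _
  have hLt : 1 ≤ L * t := by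
    rw [hL, ← rpow_add_one ht0.ne']
    exact one_le_rpow ht (by rw [neg_div]; linarith [(div_le_one hp0).2 hp])
  have hLk : L ^ k * L = t ^ (-(k + 1 : ℝ) / p) := by
    rw [← pow_succ, hL, ← rpow_natCast, ← rpow_mul ht0.le]
    push_cast; ring_nf
  have hwindow : ∀ y ∈ Ioc L (3 * L), L ^ k * exp (-3 ^ p) * cos (y * t) ^ 2 ≤
      y ^ k * (exp (-t * log (1 + y ^ p)) * cos (y * t) ^ 2) := by
    intro y hy
    have hy0 : 0 < y := hL0.trans hy.1
    rw [← mul_assoc]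
    gcongr ?_ * ?_ * _
    · exact pow_le_pow_left₀ hL0.le hy.1.le k
    · exact exp_neg_rpow_le_exp_neg_mul_log_one_add_rpow hp0 ht0 hy0.le hy.2
  have hsub : Ioc L (3 * L) ⊆ Ioi 0 := fun y hy => hL0.trans hy.1
  calc exp (-3 ^ p) / 2 * t ^ (-(k + 1 : ℝ) / p)
      ≤ L ^ k * exp (-3 ^ p) * ((3 * L - L) / 2 - 1 / (2 * t)) := by
        rw [← hLk]
        have : 1 / (2 * t) ≤ L / 2 := by
          rw [div_le_div_iff₀ (by positivity) two_pos]; linarith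
        have hk : 0 ≤ L ^ k * exp (-3 ^ p) := by positivity
        nlinarith
    _ ≤ L ^ k * exp (-3 ^ p) * ∫ y in L..3 * L, cos (y * t) ^ 2 := by
        gcongr; exact sub_le_integral_cos_mul_sq ht0 _ _
    _ = ∫ y in Ioc L (3 * L), L ^ k * exp (-3 ^ p) * cos (y * t) ^ 2 := by
        rw [intervalIntegral.integral_of_le (by linarith), integral_const_mul]
    _ ≤ ∫ y in Ioc L (3 * L), y ^ k * (exp (-t * log (1 + y ^ p)) * cos (y * t) ^ 2) :=
        setIntegral_mono_on (Continuous.integrableOn_Ioc (by fun_prop)) (hint.mono_set hsub)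
          measurableSet_Ioc hwindow
    _ ≤ ∫ y in Ioi 0, y ^ k * (exp (-t * log (1 + y ^ p)) * cos (y * t) ^ 2) :=
        setIntegral_mono_set hint
          (ae_restrict_of_forall_mem measurableSet_Ioi fun y (hy : 0 < y) => by positivity)
          hsub.eventuallyLE

section NormedSpace

variable {E : Type*} [NormedAddCommGroup E] [NormedSpace ℝ E]

lemma norm_rpow_neg_one_div_smul_rpow {p t : ℝ} (hp : 0 < p) (ht : 0 < t) (η : E) :
    ‖t ^ (-1 / p) • η‖ ^ p = ‖η‖ ^ p / t := by
  rw [norm_smul, norm_of_nonneg (rpow_nonneg ht.le _),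
    mul_rpow (rpow_nonneg ht.le _) (norm_nonneg _), rpow_neg_one_div_rpow hp.ne' ht.le,
    inv_mul_eq_div]

variable [FiniteDimensional ℝ E] [MeasurableSpace E] [BorelSpace E] (μ : Measure E)
  [μ.IsAddHaarMeasure]

lemma integrable_exp_neg_mul_log_one_add_norm_rpow {p t : ℝ} (hp : 1 ≤ p)
    (ht : (finrank ℝ E : ℝ) < t) :
    Integrable (fun ξ : E => exp (-t * log (1 + ‖ξ‖ ^ p))) μ := by
  refine ((integrable_one_add_norm ht).const_mul (2 ^ t)).mono'
    (Measurable.aestronglyMeasurable (by fun_prop)) (.of_forall fun ξ => ?_)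
  rw [norm_of_nonneg (exp_pos _).le]
  exact exp_neg_mul_log_one_add_rpow_le (norm_nonneg ξ) hp ((Nat.cast_nonneg _).trans ht.le)

lemma integrable_exp_neg_mul_log_one_add_norm_rpow_div {p t : ℝ} (hp : 1 ≤ p)
    (ht : (finrank ℝ E : ℝ) < t) :
    Integrable (fun η : E => exp (-t * log (1 + ‖η‖ ^ p / t))) μ := by
  have ht0 : 0 < t := (Nat.cast_nonneg _).trans_lt ht
  simpa only [norm_rpow_neg_one_div_smul_rpow (one_pos.trans_le hp) ht0] using
    (integrable_exp_neg_mul_log_one_add_norm_rpow μ hp ht).comp_smul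
      (rpow_pos_of_pos ht0 (-1 / p)).ne'

lemma integral_exp_neg_mul_log_one_add_norm_rpow_eq {p t : ℝ} (hp : 0 < p) (ht : 0 < t) :
    ∫ ξ, exp (-t * log (1 + ‖ξ‖ ^ p)) ∂μ =
      t ^ (-(finrank ℝ E : ℝ) / p) * ∫ η, exp (-t * log (1 + ‖η‖ ^ p / t)) ∂μ := by
  have h := μ.integral_comp_smul (fun ξ : E => exp (-t * log (1 + ‖ξ‖ ^ p))) (t ^ (-1 / p))
  simp only [norm_rpow_neg_one_div_smul_rpow hp ht] at h
  have hpos : 0 < t ^ (-(finrank ℝ E : ℝ) / p) := rpow_pos_of_pos ht _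
  rw [h, smul_eq_mul, ← rpow_natCast, ← rpow_mul ht.le, abs_inv, abs_of_pos (rpow_pos_of_pos ht _),
    show -1 / p * (finrank ℝ E : ℝ) = -(finrank ℝ E : ℝ) / p by ring, ← mul_assoc,
    mul_inv_cancel₀ hpos.ne', one_mul]

lemma integral_exp_neg_mul_log_one_add_norm_rpow_le {p s t : ℝ} (hp : 1 ≤ p)
    (hs : (finrank ℝ E : ℝ) < s) (hst : s ≤ t) :
    ∫ ξ, exp (-t * log (1 + ‖ξ‖ ^ p)) ∂μ ≤
      (∫ η, exp (-s * log (1 + ‖η‖ ^ p / s)) ∂μ) * t ^ (-(finrank ℝ E : ℝ) / p) := by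
  have hs0 : 0 < s := (Nat.cast_nonneg _).trans_lt hs
  rw [integral_exp_neg_mul_log_one_add_norm_rpow_eq μ (one_pos.trans_le hp) (hs0.trans_le hst),
    mul_comm]
  refine mul_le_mul_of_nonneg_right ?_ (rpow_nonneg (hs0.trans_le hst).le _)
  refine integral_mono (integrable_exp_neg_mul_log_one_add_norm_rpow_div μ hp (hs.trans_le hst))
    (integrable_exp_neg_mul_log_one_add_norm_rpow_div μ hp hs) fun η => exp_le_exp.2 ?_
  have := mul_log_one_add_div_le_mul_log_one_add_div (rpow_nonneg (norm_nonneg η) p) hs0 hst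
  linarith

lemma integrable_exp_neg_mul_log_one_add_norm_rpow_mul_cos_sq {p t : ℝ} (hp : 1 ≤ p)
    (ht : (finrank ℝ E : ℝ) < t) :
    Integrable (fun ξ : E => exp (-t * log (1 + ‖ξ‖ ^ p)) * cos (‖ξ‖ * t) ^ 2) μ := by
  refine (integrable_exp_neg_mul_log_one_add_norm_rpow μ hp ht).mono'
    (Measurable.aestronglyMeasurable (by fun_prop)) (.of_forall fun ξ => ?_)
  rw [norm_of_nonneg (by positivity)]
  exact mul_le_of_le_one_right (exp_pos _).le (cos_sq_le_one _)

lemma le_integral_exp_neg_mul_log_one_add_norm_rpow_mul_cos_sq [Nontrivial E] {p t : ℝ}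
    (hp : 1 ≤ p) (ht : (finrank ℝ E : ℝ) < t) :
    exp (-3 ^ p) / 2 * (finrank ℝ E * μ.real (Metric.ball 0 1)) *
        t ^ (-(finrank ℝ E : ℝ) / p) ≤
      ∫ ξ, exp (-t * log (1 + ‖ξ‖ ^ p)) * cos (‖ξ‖ * t) ^ 2 ∂μ := by
  have hd : 1 ≤ finrank ℝ E := finrank_pos
  have ht1 : 1 ≤ t := le_trans (by exact_mod_cast hd) ht.le
  have hint := integrable_exp_neg_mul_log_one_add_norm_rpow_mul_cos_sq μ hp ht
  rw [integrable_fun_norm_addHaar μ (f := fun y => exp (-t * log (1 + y ^ p)) * cos (y * t) ^ 2)]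
    at hint
  rw [integral_fun_norm_addHaar μ (fun y => exp (-t * log (1 + y ^ p)) * cos (y * t) ^ 2)]
  simp only [smul_eq_mul, nsmul_eq_mul] at hint ⊢
  have h := le_setIntegral_Ioi_pow_mul_exp_neg_mul_log_mul_cos_sq (finrank ℝ E - 1) hp ht1 hint
  rw [Nat.cast_sub hd, Nat.cast_one, sub_add_cancel] at h
  have hK : 0 ≤ (finrank ℝ E : ℝ) * μ.real (Metric.ball 0 1) := by positivity
  calc _ = (finrank ℝ E * μ.real (Metric.ball 0 1)) *
        (exp (-3 ^ p) / 2 * t ^ (-(finrank ℝ E : ℝ) / p)) := by ring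
    _ ≤ _ := (mul_le_mul_of_nonneg_left h hK).trans_eq (mul_assoc _ _ _)

theorem exists_pos_mul_rpow_le_integral_and_le_inv_mul_rpow [Nontrivial E] {p : ℝ} (hp : 1 ≤ p) :
    ∃ C > (0 : ℝ), ∀ t ≥ (finrank ℝ E : ℝ) + 1,
      C * t ^ (-(finrank ℝ E : ℝ) / p) ≤
          ∫ ξ, exp (-t * log (1 + ‖ξ‖ ^ p)) * cos (‖ξ‖ * t) ^ 2 ∂μ ∧
        ∫ ξ, exp (-t * log (1 + ‖ξ‖ ^ p)) * cos (‖ξ‖ * t) ^ 2 ∂μ ≤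
          C⁻¹ * t ^ (-(finrank ℝ E : ℝ) / p) := by
  set d : ℝ := (finrank ℝ E : ℝ)
  have hd : 0 ≤ d := Nat.cast_nonneg _
  set s := d + 1
  have hs : d < s := lt_add_one d
  set c₁ := exp (-3 ^ p) / 2 * (d * μ.real (Metric.ball 0 1))
  set c₂ := ∫ η, exp (-s * log (1 + ‖η‖ ^ p / s)) ∂μ
  have hc₁ : 0 < c₁ := by
    have : 0 < d := Nat.cast_pos.2 finrank_pos
    have : 0 < μ.real (Metric.ball 0 1) :=
      ENNReal.toReal_pos (Metric.measure_ball_pos μ 0 one_pos).ne' measure_ball_lt_top.ne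
    positivity
  have hc₂ : 0 < c₂ := integral_exp_pos (integrable_exp_neg_mul_log_one_add_norm_rpow_div μ hp hs)
  have hC : 0 < min c₁ c₂⁻¹ := lt_min hc₁ (inv_pos.2 hc₂)
  refine ⟨min c₁ c₂⁻¹, hC, fun t ht => ?_⟩
  have hpow : 0 ≤ t ^ (-d / p) := rpow_nonneg (by linarith) _
  constructor
  · calc min c₁ c₂⁻¹ * t ^ (-d / p) ≤ c₁ * t ^ (-d / p) :=
          mul_le_mul_of_nonneg_right (min_le_left _ _) hpow
      _ ≤ _ := le_integral_exp_neg_mul_log_one_add_norm_rpow_mul_cos_sq μ hp (hs.trans_le ht)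
  · calc ∫ ξ, exp (-t * log (1 + ‖ξ‖ ^ p)) * cos (‖ξ‖ * t) ^ 2 ∂μ
        ≤ ∫ ξ, exp (-t * log (1 + ‖ξ‖ ^ p)) ∂μ :=
          integral_mono
            (integrable_exp_neg_mul_log_one_add_norm_rpow_mul_cos_sq μ hp (hs.trans_le ht))
            (integrable_exp_neg_mul_log_one_add_norm_rpow μ hp (hs.trans_le ht))
            fun ξ => mul_le_of_le_one_right (exp_pos _).le (cos_sq_le_one _)
      _ ≤ c₂ * t ^ (-d / p) := integral_exp_neg_mul_log_one_add_norm_rpow_le μ hp hs ht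
      _ ≤ (min c₁ c₂⁻¹)⁻¹ * t ^ (-d / p) :=
          mul_le_mul_of_nonneg_right (le_inv_of_le_inv₀ hC (min_le_right _ _)) hpow

end NormedSpace

/-- Lemma 4.2: for `n ≥ 1` and `θ ≥ 1/2`,
`∫ (1+|ξ|^{2θ})^{-t} cos²(|ξ|t) dξ ≈ t^{-n/(2θ)}` for large `t`. -/
theorem stmt_19 (n : ℕ) (hn : 1 ≤ n) (θ : ℝ) (hθ : 1 / 2 ≤ θ) :
    ∃ C > (0 : ℝ), ∃ t₀ > (0 : ℝ), ∀ t ≥ t₀,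
      C * t ^ (-(n : ℝ) / (2 * θ)) ≤
          (∫ ξ : EuclideanSpace ℝ (Fin n),
            Real.exp (-t * Real.log (1 + ‖ξ‖ ^ (2 * θ))) * Real.cos (‖ξ‖ * t) ^ 2) ∧
        (∫ ξ : EuclideanSpace ℝ (Fin n),
            Real.exp (-t * Real.log (1 + ‖ξ‖ ^ (2 * θ))) * Real.cos (‖ξ‖ * t) ^ 2) ≤
          C⁻¹ * t ^ (-(n : ℝ) / (2 * θ)) := by
  have : Nontrivial (EuclideanSpace ℝ (Fin n)) :=
    Module.nontrivial_of_finrank_pos (R := ℝ) (by rwa [finrank_euclideanSpace_fin])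
  obtain ⟨C, hC, hbound⟩ := exists_pos_mul_rpow_le_integral_and_le_inv_mul_rpow
    (volume : Measure (EuclideanSpace ℝ (Fin n))) (p := 2 * θ) (by linarith)
  rw [finrank_euclideanSpace_fin] at hbound
  exact ⟨C, hC, n + 1, by positivity, hbound⟩
end
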